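/- arXiv:2012.04064 — 8 statements merged into one kernel-verified Lean document; each statement's English description precedes it below -/
import Mathlib

section
/- Suppose smooth functions ω, Ω, φ on an open set U ⊆ ℝ² (with ω and Ω nonvanishing) satisfy the system: Ω,₁ = ω,₁ − (ω+Ω)φ,₁; Ω,₂ = −ω,₂ + (ω−Ω)φ,₂; and Δ_ε φ = (ε₂/2)(Ω² − ω²). Then ω,₁₂/ω = φ,₁₂ + φ,₁φ,₂ and Ω,₁₂/Ω = −φ,₁₂ + φ,₁φ,₂. -/
open Filter Topology


noncomputable def pd1 (f : ℝ → ℝ → ℝ) : ℝ → ℝ → ℝ := fun x y => deriv (fun t => f t y) x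
noncomputable def pd2 (f : ℝ → ℝ → ℝ) : ℝ → ℝ → ℝ := fun x y => deriv (fun t => f x t) y
noncomputable def pd12 (f : ℝ → ℝ → ℝ) : ℝ → ℝ → ℝ := pd2 (pd1 f)
noncomputable def lapE (e : ℝ) (f : ℝ → ℝ → ℝ) : ℝ → ℝ → ℝ :=
  fun x y => pd1 (pd1 f) x y + e * pd2 (pd2 f) x y

/-- The pseudo-Calapso equation `Δ_ε(ω,₁₂/ω) + ε₂(ω²),₁₂ = 0` holding on a set `U`,
with `ε = ε₁ε₂`. -/
def PseudoCalapsoOn (e1 e2 : ℝ) (U : Set (ℝ × ℝ)) (ω : ℝ → ℝ → ℝ) : Prop :=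
  ∀ p ∈ U, lapE (e1 * e2) (fun x y => pd12 ω x y / ω x y) p.1 p.2
      + e2 * pd12 (fun x y => (ω x y) ^ 2) p.1 p.2 = 0

lemma slice1_hasDerivAt {E : Type*} [NormedAddCommGroup E] [NormedSpace ℝ E]
    {G : ℝ × ℝ → E} {p : ℝ × ℝ} (h : DifferentiableAt ℝ G p) :
    HasDerivAt (fun t => G (t, p.2)) (fderiv ℝ G p ((1 : ℝ), (0 : ℝ))) p.1 := by
  have hl : HasDerivAt (fun t : ℝ => (t, p.2)) ((1 : ℝ), (0 : ℝ)) p.1 :=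
    (hasDerivAt_id p.1).prodMk (hasDerivAt_const p.1 p.2)
  have hG : HasFDerivAt G (fderiv ℝ G p) (p.1, p.2) := by
    simpa using h.hasFDerivAt
  simpa [Function.comp_def] using hG.comp_hasDerivAt p.1 hl

lemma slice2_hasDerivAt {E : Type*} [NormedAddCommGroup E] [NormedSpace ℝ E]
    {G : ℝ × ℝ → E} {p : ℝ × ℝ} (h : DifferentiableAt ℝ G p) :
    HasDerivAt (fun t => G (p.1, t)) (fderiv ℝ G p ((0 : ℝ), (1 : ℝ))) p.2 := by
  have hl : HasDerivAt (fun t : ℝ => (p.1, t)) ((0 : ℝ), (1 : ℝ)) p.2 :=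
    (hasDerivAt_const p.2 p.1).prodMk (hasDerivAt_id p.2)
  have hG : HasFDerivAt G (fderiv ℝ G p) (p.1, p.2) := by
    simpa using h.hasFDerivAt
  simpa [Function.comp_def] using hG.comp_hasDerivAt p.2 hl

lemma pd_facts {f : ℝ → ℝ → ℝ} {U : Set (ℝ × ℝ)} (hU : IsOpen U)
    (hf : ContDiffOn ℝ (⊤ : ℕ∞) (fun p : ℝ × ℝ => f p.1 p.2) U) {p : ℝ × ℝ} (hp : p ∈ U) :
    HasDerivAt (fun t => f t p.2) (pd1 f p.1 p.2) p.1 ∧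
    HasDerivAt (fun t => f p.1 t) (pd2 f p.1 p.2) p.2 ∧
    HasDerivAt (fun t => pd1 f p.1 t) (pd12 f p.1 p.2) p.2 ∧
    HasDerivAt (fun t => pd2 f t p.2) (pd12 f p.1 p.2) p.1 := by
  set F : ℝ × ℝ → ℝ := fun q => f q.1 q.2 with hF
  have hdiff : ∀ q ∈ U, DifferentiableAt ℝ F q := fun q hq =>
    ((hf q hq).contDiffAt (hU.mem_nhds hq)).differentiableAt (by simp)
  -- pd1 and pd2 equal fderiv applied to basis vectors, at every point of U
  have hpd1 : ∀ q ∈ U, pd1 f q.1 q.2 = fderiv ℝ F q (1, 0) := fun q hq =>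
    (slice1_hasDerivAt (hdiff q hq)).deriv
  have hpd2 : ∀ q ∈ U, pd2 f q.1 q.2 = fderiv ℝ F q (0, 1) := fun q hq =>
    (slice2_hasDerivAt (hdiff q hq)).deriv
  have h1 : HasDerivAt (fun t => f t p.2) (pd1 f p.1 p.2) p.1 := by
    rw [hpd1 p hp]; exact slice1_hasDerivAt (hdiff p hp)
  have h2 : HasDerivAt (fun t => f p.1 t) (pd2 f p.1 p.2) p.2 := by
    rw [hpd2 p hp]; exact slice2_hasDerivAt (hdiff p hp)
  -- the derivative function G
  set G : ℝ × ℝ → (ℝ × ℝ →L[ℝ] ℝ) := fderiv ℝ F with hGdef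
  have hGc : DifferentiableAt ℝ G p := by
    have : ContDiffAt ℝ (⊤ : ℕ∞) F p := (hf p hp).contDiffAt (hU.mem_nhds hp)
    exact (this.fderiv_right (m := 1) (WithTop.coe_le_coe.mpr le_top)).differentiableAt one_ne_zero
  have hmem1 : ∀ᶠ t in 𝓝 p.1, (t, p.2) ∈ U := by
    have hc : ContinuousAt (fun t : ℝ => (t, p.2)) p.1 :=
      (continuous_id.prodMk continuous_const).continuousAt
    exact hc.preimage_mem_nhds (hU.mem_nhds (by simpa using hp))
  have hmem2 : ∀ᶠ t in 𝓝 p.2, (p.1, t) ∈ U := by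
    have hc : ContinuousAt (fun t : ℝ => (p.1, t)) p.2 :=
      (continuous_const.prodMk continuous_id).continuousAt
    exact hc.preimage_mem_nhds (hU.mem_nhds (by simpa using hp))
  -- symmetry of second derivative
  have hsymm : fderiv ℝ G p (1, 0) (0, 1) = fderiv ℝ G p (0, 1) (1, 0) := by
    have hev : ∀ᶠ y in 𝓝 p, HasFDerivAt F (G y) y := by
      filter_upwards [hU.mem_nhds hp] with y hy using (hdiff y hy).hasFDerivAt
    exact second_derivative_symmetric_of_eventually hev hGc.hasFDerivAt _ _
  have h12 : HasDerivAt (fun t => pd1 f p.1 t) (pd12 f p.1 p.2) p.2 := by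
    have hg : HasDerivAt (fun t => G (p.1, t)) (fderiv ℝ G p (0, 1)) p.2 :=
      slice2_hasDerivAt hGc
    have hga : HasDerivAt (fun t => G (p.1, t) (1, 0)) (fderiv ℝ G p (0, 1) (1, 0)) p.2 := by
      have := hg.clm_apply (hasDerivAt_const p.2 ((1 : ℝ), (0 : ℝ)))
      simpa using this
    have hEq : (fun t => pd1 f p.1 t) =ᶠ[𝓝 p.2] fun t => G (p.1, t) (1, 0) := by
      filter_upwards [hmem2] with t ht using hpd1 (p.1, t) ht
    have hfin : HasDerivAt (fun t => pd1 f p.1 t) (fderiv ℝ G p (0, 1) (1, 0)) p.2 :=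
      hga.congr_of_eventuallyEq hEq
    have : pd12 f p.1 p.2 = fderiv ℝ G p (0, 1) (1, 0) := hfin.deriv
    rw [this]; exact hfin
  have h21 : HasDerivAt (fun t => pd2 f t p.2) (pd12 f p.1 p.2) p.1 := by
    have hg : HasDerivAt (fun t => G (t, p.2)) (fderiv ℝ G p (1, 0)) p.1 :=
      slice1_hasDerivAt hGc
    have hga : HasDerivAt (fun t => G (t, p.2) (0, 1)) (fderiv ℝ G p (1, 0) (0, 1)) p.1 := by
      have := hg.clm_apply (hasDerivAt_const p.1 ((0 : ℝ), (1 : ℝ)))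
      simpa using this
    have hEq : (fun t => pd2 f t p.2) =ᶠ[𝓝 p.1] fun t => G (t, p.2) (0, 1) := by
      filter_upwards [hmem1] with t ht using hpd2 (t, p.2) ht
    have hfin : HasDerivAt (fun t => pd2 f t p.2) (fderiv ℝ G p (1, 0) (0, 1)) p.1 :=
      hga.congr_of_eventuallyEq hEq
    rw [show pd12 f p.1 p.2 = fderiv ℝ G p (0, 1) (1, 0) from
      (by
        have hg2 : HasDerivAt (fun t => G (p.1, t)) (fderiv ℝ G p (0, 1)) p.2 :=
          slice2_hasDerivAt hGc
        have hga2 : HasDerivAt (fun t => G (p.1, t) (1, 0)) (fderiv ℝ G p (0, 1) (1, 0)) p.2 := by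
          have := hg2.clm_apply (hasDerivAt_const p.2 ((1 : ℝ), (0 : ℝ)))
          simpa using this
        have hEq2 : (fun t => pd1 f p.1 t) =ᶠ[𝓝 p.2] fun t => G (p.1, t) (1, 0) := by
          filter_upwards [hmem2] with t ht using hpd1 (p.1, t) ht
        exact (hga2.congr_of_eventuallyEq hEq2).deriv), ← hsymm]
    exact hfin
  exact ⟨h1, h2, h12, h21⟩

theorem ratio_identities (e1 e2 : ℝ)
    (he1 : e1 = 1 ∨ e1 = -1) (he2 : e2 = 1 ∨ e2 = -1)
    (U : Set (ℝ × ℝ)) (hU : IsOpen U)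
    (ω Ω φ : ℝ → ℝ → ℝ)
    (hω : ContDiffOn ℝ (⊤ : ℕ∞) (fun p : ℝ × ℝ => ω p.1 p.2) U)
    (hΩ : ContDiffOn ℝ (⊤ : ℕ∞) (fun p : ℝ × ℝ => Ω p.1 p.2) U)
    (hφ : ContDiffOn ℝ (⊤ : ℕ∞) (fun p : ℝ × ℝ => φ p.1 p.2) U)
    (hω0 : ∀ p ∈ U, ω p.1 p.2 ≠ 0) (hΩ0 : ∀ p ∈ U, Ω p.1 p.2 ≠ 0)
    (heq1 : ∀ p ∈ U, pd1 Ω p.1 p.2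
      = pd1 ω p.1 p.2 - (ω p.1 p.2 + Ω p.1 p.2) * pd1 φ p.1 p.2)
    (heq2 : ∀ p ∈ U, pd2 Ω p.1 p.2
      = -pd2 ω p.1 p.2 + (ω p.1 p.2 - Ω p.1 p.2) * pd2 φ p.1 p.2)
    (heq3 : ∀ p ∈ U, lapE (e1 * e2) φ p.1 p.2
      = e2 / 2 * ((Ω p.1 p.2) ^ 2 - (ω p.1 p.2) ^ 2)) :
    ∀ p ∈ U,
      pd12 ω p.1 p.2 / ω p.1 p.2
        = pd12 φ p.1 p.2 + pd1 φ p.1 p.2 * pd2 φ p.1 p.2 ∧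
      pd12 Ω p.1 p.2 / Ω p.1 p.2
        = -pd12 φ p.1 p.2 + pd1 φ p.1 p.2 * pd2 φ p.1 p.2 := by
  
  intro p hp
  obtain ⟨hω1, hω2, hω12, hω21⟩ := pd_facts hU hω hp
  obtain ⟨hΩ1, hΩ2, hΩ12, hΩ21⟩ := pd_facts hU hΩ hp
  obtain ⟨hφ1, hφ2, hφ12, hφ21⟩ := pd_facts hU hφ hp
  have hmem1 : ∀ᶠ t in nhds p.1, (t, p.2) ∈ U := by
    have hc : ContinuousAt (fun t : ℝ => (t, p.2)) p.1 :=
      (continuous_id.prodMk continuous_const).continuousAt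
    exact hc.preimage_mem_nhds (hU.mem_nhds (by simpa using hp))
  have hmem2 : ∀ᶠ t in nhds p.2, (p.1, t) ∈ U := by
    have hc : ContinuousAt (fun t : ℝ => (p.1, t)) p.2 :=
      (continuous_const.prodMk continuous_id).continuousAt
    exact hc.preimage_mem_nhds (hU.mem_nhds (by simpa using hp))
  -- differentiate heq1 in the second variable
  have hA : HasDerivAt (fun t => pd1 Ω p.1 t)
      (pd12 ω p.1 p.2 - ((pd2 ω p.1 p.2 + pd2 Ω p.1 p.2) * pd1 φ p.1 p.2
        + (ω p.1 p.2 + Ω p.1 p.2) * pd12 φ p.1 p.2)) p.2 := by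
    have hrhs : HasDerivAt
        (fun t => pd1 ω p.1 t - (ω p.1 t + Ω p.1 t) * pd1 φ p.1 t)
        (pd12 ω p.1 p.2 - ((pd2 ω p.1 p.2 + pd2 Ω p.1 p.2) * pd1 φ p.1 p.2
          + (ω p.1 p.2 + Ω p.1 p.2) * pd12 φ p.1 p.2)) p.2 :=
      hω12.sub ((hω2.add hΩ2).mul hφ12)
    refine hrhs.congr_of_eventuallyEq ?_
    filter_upwards [hmem2] with t ht using heq1 (p.1, t) ht
  have eqA : pd12 Ω p.1 p.2
      = pd12 ω p.1 p.2 - ((pd2 ω p.1 p.2 + pd2 Ω p.1 p.2) * pd1 φ p.1 p.2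
        + (ω p.1 p.2 + Ω p.1 p.2) * pd12 φ p.1 p.2) := hΩ12.unique hA
  -- differentiate heq2 in the first variable
  have hB : HasDerivAt (fun t => pd2 Ω t p.2)
      (-pd12 ω p.1 p.2 + ((pd1 ω p.1 p.2 - pd1 Ω p.1 p.2) * pd2 φ p.1 p.2
        + (ω p.1 p.2 - Ω p.1 p.2) * pd12 φ p.1 p.2)) p.1 := by
    have hrhs : HasDerivAt
        (fun t => -pd2 ω t p.2 + (ω t p.2 - Ω t p.2) * pd2 φ t p.2)
        (-pd12 ω p.1 p.2 + ((pd1 ω p.1 p.2 - pd1 Ω p.1 p.2) * pd2 φ p.1 p.2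
          + (ω p.1 p.2 - Ω p.1 p.2) * pd12 φ p.1 p.2)) p.1 :=
      hω21.neg.add ((hω1.sub hΩ1).mul hφ21)
    refine hrhs.congr_of_eventuallyEq ?_
    filter_upwards [hmem1] with t ht using heq2 (t, p.2) ht
  have eqB : pd12 Ω p.1 p.2
      = -pd12 ω p.1 p.2 + ((pd1 ω p.1 p.2 - pd1 Ω p.1 p.2) * pd2 φ p.1 p.2
        + (ω p.1 p.2 - Ω p.1 p.2) * pd12 φ p.1 p.2) := hΩ21.unique hB
  rw [heq2 p hp] at eqA
  rw [heq1 p hp] at eqB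
  constructor
  · rw [div_eq_iff (hω0 p hp)]
    nlinarith [eqA, eqB]
  · rw [div_eq_iff (hΩ0 p hp)]
    nlinarith [eqA, eqB]
end

section
/- Suppose smooth functions ω, Ω, φ on an open set U ⊆ ℝ² (with ω nonvanishing) satisfy: Ω,₁ = ω,₁ − (ω+Ω)φ,₁; Ω,₂ = −ω,₂ + (ω−Ω)φ,₂; Δ_ε φ = (ε₂/2)(Ω² − ω²). Then ω satisfies the pseudo-Calapso equation Δ_ε(ω,₁₂/ω) + ε₂(ω²),₁₂ = 0. -/
open Filter Topology

def Sm (U : Set (ℝ × ℝ)) (f : ℝ → ℝ → ℝ) : Prop :=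
  ContDiffOn ℝ ((⊤ : ℕ∞) : WithTop ℕ∞) (fun p : ℝ × ℝ => f p.1 p.2) U

variable {U : Set (ℝ × ℝ)} {f g : ℝ → ℝ → ℝ} {p : ℝ × ℝ}

lemma line1_hasFDerivAt (x y : ℝ) :
    HasFDerivAt (fun t : ℝ => ((t, y) : ℝ × ℝ))
      ((ContinuousLinearMap.id ℝ ℝ).prod 0) x :=
  (hasFDerivAt_id x).prodMk (hasFDerivAt_const y x)

lemma line2_hasFDerivAt (x y : ℝ) :
    HasFDerivAt (fun t : ℝ => ((x, t) : ℝ × ℝ))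
      ((0 : ℝ →L[ℝ] ℝ).prod (ContinuousLinearMap.id ℝ ℝ)) y :=
  (hasFDerivAt_const x y).prodMk (hasFDerivAt_id y)

lemma Sm.contDiffAt (hU : IsOpen U) (hf : Sm U f) (hp : p ∈ U) :
    ContDiffAt ℝ ((⊤ : ℕ∞) : WithTop ℕ∞) (fun q : ℝ × ℝ => f q.1 q.2) p :=
  ContDiffOn.contDiffAt hf (hU.mem_nhds hp)

lemma Sm.diffAt (hU : IsOpen U) (hf : Sm U f) (hp : p ∈ U) :
    DifferentiableAt ℝ (fun q : ℝ × ℝ => f q.1 q.2) p :=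
  (hf.contDiffAt hU hp).differentiableAt (by simp)

lemma Sm.slice1 (hU : IsOpen U) (hf : Sm U f) (hp : p ∈ U) :
    HasDerivAt (fun t => f t p.2)
      (fderiv ℝ (fun q : ℝ × ℝ => f q.1 q.2) p (1, 0)) p.1 := by
  have h := ((hf.diffAt hU hp).hasFDerivAt.comp p.1 (line1_hasFDerivAt p.1 p.2))
  have := h.hasDerivAt
  exact this

lemma Sm.slice2 (hU : IsOpen U) (hf : Sm U f) (hp : p ∈ U) :
    HasDerivAt (fun t => f p.1 t)
      (fderiv ℝ (fun q : ℝ × ℝ => f q.1 q.2) p (0, 1)) p.2 := by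
  have h := ((hf.diffAt hU hp).hasFDerivAt.comp p.2 (line2_hasFDerivAt p.1 p.2))
  have := h.hasDerivAt
  exact this

lemma pd1_eq (hU : IsOpen U) (hf : Sm U f) (hp : p ∈ U) :
    pd1 f p.1 p.2 = fderiv ℝ (fun q : ℝ × ℝ => f q.1 q.2) p (1, 0) :=
  (hf.slice1 hU hp).deriv

lemma pd2_eq (hU : IsOpen U) (hf : Sm U f) (hp : p ∈ U) :
    pd2 f p.1 p.2 = fderiv ℝ (fun q : ℝ × ℝ => f q.1 q.2) p (0, 1) :=
  (hf.slice2 hU hp).deriv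

lemma Sm.pd1 (hU : IsOpen U) (hf : Sm U f) : Sm U (pd1 f) := by
  have h1 : ContDiffOn ℝ ((⊤ : ℕ∞) : WithTop ℕ∞) (fderiv ℝ (fun q : ℝ × ℝ => f q.1 q.2)) U :=
    hf.fderiv_of_isOpen hU (le_of_eq rfl)
  have h2 : ContDiffOn ℝ ((⊤ : ℕ∞) : WithTop ℕ∞)
      (fun p : ℝ × ℝ => fderiv ℝ (fun q : ℝ × ℝ => f q.1 q.2) p ((1:ℝ), (0:ℝ))) U :=
    (ContinuousLinearMap.apply ℝ ℝ ((1:ℝ), (0:ℝ))).contDiff.comp_contDiffOn h1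
  exact h2.congr fun q hq => pd1_eq hU hf hq

lemma Sm.pd2 (hU : IsOpen U) (hf : Sm U f) : Sm U (pd2 f) := by
  have h1 : ContDiffOn ℝ ((⊤ : ℕ∞) : WithTop ℕ∞) (fderiv ℝ (fun q : ℝ × ℝ => f q.1 q.2)) U :=
    hf.fderiv_of_isOpen hU (le_of_eq rfl)
  have h2 : ContDiffOn ℝ ((⊤ : ℕ∞) : WithTop ℕ∞)
      (fun p : ℝ × ℝ => fderiv ℝ (fun q : ℝ × ℝ => f q.1 q.2) p ((0:ℝ), (1:ℝ))) U :=
    (ContinuousLinearMap.apply ℝ ℝ ((0:ℝ), (1:ℝ))).contDiff.comp_contDiffOn h1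
  exact h2.congr fun q hq => pd2_eq hU hf hq

lemma eventually_line1 (hU : IsOpen U) (hp : p ∈ U) :
    ∀ᶠ t in 𝓝 p.1, ((t, p.2) : ℝ × ℝ) ∈ U := by
  have hc : ContinuousAt (fun t : ℝ => ((t, p.2) : ℝ × ℝ)) p.1 := by fun_prop
  have := hc.preimage_mem_nhds (by simpa [Prod.mk.eta] using hU.mem_nhds hp)
  exact this

lemma eventually_line2 (hU : IsOpen U) (hp : p ∈ U) :
    ∀ᶠ t in 𝓝 p.2, ((p.1, t) : ℝ × ℝ) ∈ U := by
  have hc : ContinuousAt (fun t : ℝ => ((p.1, t) : ℝ × ℝ)) p.2 := by fun_prop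
  have := hc.preimage_mem_nhds (by simpa [Prod.mk.eta] using hU.mem_nhds hp)
  exact this

lemma pd1_congr (hU : IsOpen U) (h : ∀ q ∈ U, f q.1 q.2 = g q.1 q.2) (hp : p ∈ U) :
    pd1 f p.1 p.2 = pd1 g p.1 p.2 := by
  apply Filter.EventuallyEq.deriv_eq
  filter_upwards [eventually_line1 hU hp] with t ht
  exact h (t, p.2) ht

lemma pd2_congr (hU : IsOpen U) (h : ∀ q ∈ U, f q.1 q.2 = g q.1 q.2) (hp : p ∈ U) :
    pd2 f p.1 p.2 = pd2 g p.1 p.2 := by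
  apply Filter.EventuallyEq.deriv_eq
  filter_upwards [eventually_line2 hU hp] with t ht
  exact h (p.1, t) ht

-- arithmetic rules (pointwise on U)
lemma pd1_add (hU : IsOpen U) (hf : Sm U f) (hg : Sm U g) (hp : p ∈ U) :
    pd1 (fun x y => f x y + g x y) p.1 p.2 = pd1 f p.1 p.2 + pd1 g p.1 p.2 := by
  exact ((hf.slice1 hU hp).add (hg.slice1 hU hp)).deriv.trans
    (by rw [← pd1_eq hU hf hp, ← pd1_eq hU hg hp])

lemma pd2_add (hU : IsOpen U) (hf : Sm U f) (hg : Sm U g) (hp : p ∈ U) :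
    pd2 (fun x y => f x y + g x y) p.1 p.2 = pd2 f p.1 p.2 + pd2 g p.1 p.2 := by
  exact ((hf.slice2 hU hp).add (hg.slice2 hU hp)).deriv.trans
    (by rw [← pd2_eq hU hf hp, ← pd2_eq hU hg hp])

lemma pd1_sub (hU : IsOpen U) (hf : Sm U f) (hg : Sm U g) (hp : p ∈ U) :
    pd1 (fun x y => f x y - g x y) p.1 p.2 = pd1 f p.1 p.2 - pd1 g p.1 p.2 := by
  exact ((hf.slice1 hU hp).sub (hg.slice1 hU hp)).deriv.trans
    (by rw [← pd1_eq hU hf hp, ← pd1_eq hU hg hp])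

lemma pd2_sub (hU : IsOpen U) (hf : Sm U f) (hg : Sm U g) (hp : p ∈ U) :
    pd2 (fun x y => f x y - g x y) p.1 p.2 = pd2 f p.1 p.2 - pd2 g p.1 p.2 := by
  exact ((hf.slice2 hU hp).sub (hg.slice2 hU hp)).deriv.trans
    (by rw [← pd2_eq hU hf hp, ← pd2_eq hU hg hp])

lemma pd1_mul (hU : IsOpen U) (hf : Sm U f) (hg : Sm U g) (hp : p ∈ U) :
    pd1 (fun x y => f x y * g x y) p.1 p.2
      = pd1 f p.1 p.2 * g p.1 p.2 + f p.1 p.2 * pd1 g p.1 p.2 := by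
  exact ((hf.slice1 hU hp).mul (hg.slice1 hU hp)).deriv.trans
    (by rw [← pd1_eq hU hf hp, ← pd1_eq hU hg hp])

lemma pd2_mul (hU : IsOpen U) (hf : Sm U f) (hg : Sm U g) (hp : p ∈ U) :
    pd2 (fun x y => f x y * g x y) p.1 p.2
      = pd2 f p.1 p.2 * g p.1 p.2 + f p.1 p.2 * pd2 g p.1 p.2 := by
  exact ((hf.slice2 hU hp).mul (hg.slice2 hU hp)).deriv.trans
    (by rw [← pd2_eq hU hf hp, ← pd2_eq hU hg hp])

lemma pd1_const_mul (c : ℝ) (hU : IsOpen U) (hf : Sm U f) (hp : p ∈ U) :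
    pd1 (fun x y => c * f x y) p.1 p.2 = c * pd1 f p.1 p.2 := by
  exact ((hf.slice1 hU hp).const_mul c).deriv.trans
    (by rw [← pd1_eq hU hf hp])

lemma pd2_const_mul (c : ℝ) (hU : IsOpen U) (hf : Sm U f) (hp : p ∈ U) :
    pd2 (fun x y => c * f x y) p.1 p.2 = c * pd2 f p.1 p.2 := by
  exact ((hf.slice2 hU hp).const_mul c).deriv.trans
    (by rw [← pd2_eq hU hf hp])

lemma pd1_sq (hU : IsOpen U) (hf : Sm U f) (hp : p ∈ U) :
    pd1 (fun x y => f x y ^ 2) p.1 p.2 = 2 * f p.1 p.2 * pd1 f p.1 p.2 := by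
  have h : pd1 (fun x y => f x y ^ 2) p.1 p.2
      = pd1 (fun x y => f x y * f x y) p.1 p.2 := by
    simp only [pd1, sq]
  rw [h, pd1_mul hU hf hf hp]; ring

lemma pd2_sq (hU : IsOpen U) (hf : Sm U f) (hp : p ∈ U) :
    pd2 (fun x y => f x y ^ 2) p.1 p.2 = 2 * f p.1 p.2 * pd2 f p.1 p.2 := by
  have h : pd2 (fun x y => f x y ^ 2) p.1 p.2
      = pd2 (fun x y => f x y * f x y) p.1 p.2 := by
    simp only [pd2, sq]
  rw [h, pd2_mul hU hf hf hp]; ring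

-- Sm closure rules
lemma Sm.add (hf : Sm U f) (hg : Sm U g) : Sm U fun x y => f x y + g x y := ContDiffOn.add hf hg
lemma Sm.sub (hf : Sm U f) (hg : Sm U g) : Sm U fun x y => f x y - g x y := ContDiffOn.sub hf hg
lemma Sm.mul (hf : Sm U f) (hg : Sm U g) : Sm U fun x y => f x y * g x y := ContDiffOn.mul hf hg
lemma Sm.constMul (c : ℝ) (hf : Sm U f) : Sm U fun x y => c * f x y :=
  ContDiffOn.mul contDiffOn_const hf
lemma Sm.sq (hf : Sm U f) : Sm U fun x y => f x y ^ 2 := by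
  have := ContDiffOn.mul hf hf
  exact this.congr fun q hq => by ring

lemma diffAt_fderiv (hU : IsOpen U) (hf : Sm U f) (hp : p ∈ U) :
    DifferentiableAt ℝ (fderiv ℝ (fun q : ℝ × ℝ => f q.1 q.2)) p := by
  have h : ContDiffAt ℝ ((⊤ : ℕ∞) : WithTop ℕ∞) (fderiv ℝ (fun q : ℝ × ℝ => f q.1 q.2)) p :=
    (hf.contDiffAt hU hp).fderiv_right (le_of_eq rfl)
  exact h.differentiableAt (by simp)

lemma pd2_pd1_eq (hU : IsOpen U) (hf : Sm U f) (hp : p ∈ U) :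
    pd2 (pd1 f) p.1 p.2
      = fderiv ℝ (fderiv ℝ (fun q : ℝ × ℝ => f q.1 q.2)) p (0, 1) (1, 0) := by
  set F := fun q : ℝ × ℝ => f q.1 q.2 with hF
  have hg : Sm U (fun x y => fderiv ℝ F (x, y) ((1:ℝ), (0:ℝ))) := by
    have h1 : ContDiffOn ℝ ((⊤ : ℕ∞) : WithTop ℕ∞) (fderiv ℝ F) U := hf.fderiv_of_isOpen hU (le_of_eq rfl)
    exact (ContinuousLinearMap.apply ℝ ℝ ((1:ℝ), (0:ℝ))).contDiff.comp_contDiffOn h1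
  have e1 : pd2 (pd1 f) p.1 p.2
      = pd2 (fun x y => fderiv ℝ F (x, y) ((1:ℝ), (0:ℝ))) p.1 p.2 :=
    pd2_congr hU (fun q hq => by simpa using pd1_eq hU hf hq) hp
  have e2 := pd2_eq hU hg hp
  rw [e1, e2]
  have e3 : fderiv ℝ (fun q : ℝ × ℝ => fderiv ℝ F q ((1:ℝ), (0:ℝ))) p
      = (fderiv ℝ F p).comp (fderiv ℝ (fun _ : ℝ × ℝ => (((1:ℝ), (0:ℝ)) : ℝ × ℝ)) p)
        + (fderiv ℝ (fderiv ℝ F) p).flip ((1:ℝ), (0:ℝ)) :=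
    fderiv_clm_apply (diffAt_fderiv hU hf hp) (differentiableAt_const _)
  have e4 : (fun q : ℝ × ℝ => fderiv ℝ F (q.1, q.2) ((1:ℝ), (0:ℝ)))
      = fun q : ℝ × ℝ => fderiv ℝ F q ((1:ℝ), (0:ℝ)) := rfl
  rw [e4, e3]
  simp

lemma pd1_pd2_eq (hU : IsOpen U) (hf : Sm U f) (hp : p ∈ U) :
    pd1 (pd2 f) p.1 p.2
      = fderiv ℝ (fderiv ℝ (fun q : ℝ × ℝ => f q.1 q.2)) p (1, 0) (0, 1) := by
  set F := fun q : ℝ × ℝ => f q.1 q.2 with hF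
  have hg : Sm U (fun x y => fderiv ℝ F (x, y) ((0:ℝ), (1:ℝ))) := by
    have h1 : ContDiffOn ℝ ((⊤ : ℕ∞) : WithTop ℕ∞) (fderiv ℝ F) U := hf.fderiv_of_isOpen hU (le_of_eq rfl)
    exact (ContinuousLinearMap.apply ℝ ℝ ((0:ℝ), (1:ℝ))).contDiff.comp_contDiffOn h1
  have e1 : pd1 (pd2 f) p.1 p.2
      = pd1 (fun x y => fderiv ℝ F (x, y) ((0:ℝ), (1:ℝ))) p.1 p.2 :=
    pd1_congr hU (fun q hq => by simpa using pd2_eq hU hf hq) hp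
  have e2 := pd1_eq hU hg hp
  rw [e1, e2]
  have e3 : fderiv ℝ (fun q : ℝ × ℝ => fderiv ℝ F q ((0:ℝ), (1:ℝ))) p
      = (fderiv ℝ F p).comp (fderiv ℝ (fun _ : ℝ × ℝ => (((0:ℝ), (1:ℝ)) : ℝ × ℝ)) p)
        + (fderiv ℝ (fderiv ℝ F) p).flip ((0:ℝ), (1:ℝ)) :=
    fderiv_clm_apply (diffAt_fderiv hU hf hp) (differentiableAt_const _)
  have e4 : (fun q : ℝ × ℝ => fderiv ℝ F (q.1, q.2) ((0:ℝ), (1:ℝ)))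
      = fun q : ℝ × ℝ => fderiv ℝ F q ((0:ℝ), (1:ℝ)) := rfl
  rw [e4, e3]
  simp

lemma pd_comm (hU : IsOpen U) (hf : Sm U f) (hp : p ∈ U) :
    pd2 (pd1 f) p.1 p.2 = pd1 (pd2 f) p.1 p.2 := by
  rw [pd2_pd1_eq hU hf hp, pd1_pd2_eq hU hf hp]
  exact ((hf.contDiffAt hU hp).isSymmSndFDerivAt (by simp only [minSmoothness_of_isRCLikeNormedField]; exact WithTop.coe_le_coe.mpr (le_top : (2 : ℕ∞) ≤ ⊤))) _ _

lemma pd1_neg (hU : IsOpen U) (hf : Sm U f) (hp : p ∈ U) :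
    pd1 (fun x y => -f x y) p.1 p.2 = -pd1 f p.1 p.2 := by
  exact ((hf.slice1 hU hp).neg).deriv.trans (by rw [← pd1_eq hU hf hp])

lemma pd2_neg (hU : IsOpen U) (hf : Sm U f) (hp : p ∈ U) :
    pd2 (fun x y => -f x y) p.1 p.2 = -pd2 f p.1 p.2 := by
  exact ((hf.slice2 hU hp).neg).deriv.trans (by rw [← pd2_eq hU hf hp])

lemma Sm.neg (hf : Sm U f) : Sm U fun x y => -f x y := ContDiffOn.neg hf


theorem omega_solves_pseudoCalapso (e1 e2 : ℝ)
    (he1 : e1 = 1 ∨ e1 = -1) (he2 : e2 = 1 ∨ e2 = -1)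
    (U : Set (ℝ × ℝ)) (hU : IsOpen U)
    (ω Ω φ : ℝ → ℝ → ℝ)
    (hω : ContDiffOn ℝ (⊤ : ℕ∞) (fun p : ℝ × ℝ => ω p.1 p.2) U)
    (hΩ : ContDiffOn ℝ (⊤ : ℕ∞) (fun p : ℝ × ℝ => Ω p.1 p.2) U)
    (hφ : ContDiffOn ℝ (⊤ : ℕ∞) (fun p : ℝ × ℝ => φ p.1 p.2) U)
    (hω0 : ∀ p ∈ U, ω p.1 p.2 ≠ 0)
    (heq1 : ∀ p ∈ U, pd1 Ω p.1 p.2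
      = pd1 ω p.1 p.2 - (ω p.1 p.2 + Ω p.1 p.2) * pd1 φ p.1 p.2)
    (heq2 : ∀ p ∈ U, pd2 Ω p.1 p.2
      = -pd2 ω p.1 p.2 + (ω p.1 p.2 - Ω p.1 p.2) * pd2 φ p.1 p.2)
    (heq3 : ∀ p ∈ U, lapE (e1 * e2) φ p.1 p.2
      = e2 / 2 * ((Ω p.1 p.2) ^ 2 - (ω p.1 p.2) ^ 2)) :
    PseudoCalapsoOn e1 e2 U ω := by
  have hw : Sm U ω := hω.of_le (by simp)
  have hW : Sm U Ω := hΩ.of_le (by simp)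
  have hf : Sm U φ := hφ.of_le (by simp)
  simp only [lapE] at heq3
  -- smooth atoms
  have ha : Sm U (pd1 φ) := hf.pd1 hU
  have hb : Sm U (pd2 φ) := hf.pd2 hU
  have hc : Sm U (pd2 (pd1 φ)) := ha.pd2 hU
  have ha1 : Sm U (pd1 (pd1 φ)) := ha.pd1 hU
  have hb1 : Sm U (pd1 (pd2 φ)) := hb.pd1 hU
  have hb2 : Sm U (pd2 (pd2 φ)) := hb.pd2 hU
  have hc1 : Sm U (pd1 (pd2 (pd1 φ))) := hc.pd1 hU
  have hc2 : Sm U (pd2 (pd2 (pd1 φ))) := hc.pd2 hU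
  have ha11 : Sm U (pd1 (pd1 (pd1 φ))) := ha1.pd1 hU
  have ha12 : Sm U (pd2 (pd1 (pd1 φ))) := ha1.pd2 hU
  have hb21 : Sm U (pd1 (pd2 (pd2 φ))) := hb2.pd1 hU
  have hb22 : Sm U (pd2 (pd2 (pd2 φ))) := hb2.pd2 hU
  have hw1 : Sm U (pd1 ω) := hw.pd1 hU
  have hw2 : Sm U (pd2 ω) := hw.pd2 hU
  have hW1 : Sm U (pd1 Ω) := hW.pd1 hU
  have hW2 : Sm U (pd2 Ω) := hW.pd2 hU
  -- commutation facts on U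
  have Cphi : ∀ q ∈ U, pd2 (pd1 φ) q.1 q.2 = pd1 (pd2 φ) q.1 q.2 :=
    fun q hq => pd_comm hU hf hq
  -- Step: mixed derivative of Ω
  have big1 : ∀ q ∈ U, pd2 (pd1 Ω) q.1 q.2
      = pd2 (pd1 ω) q.1 q.2 - ((pd2 ω q.1 q.2 + pd2 Ω q.1 q.2) * pd1 φ q.1 q.2
        + (ω q.1 q.2 + Ω q.1 q.2) * pd2 (pd1 φ) q.1 q.2) := by
    intro q hq
    have h1 : pd2 (pd1 Ω) q.1 q.2
        = pd2 (fun x y => pd1 ω x y - (ω x y + Ω x y) * pd1 φ x y) q.1 q.2 :=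
      pd2_congr hU heq1 hq
    rw [h1, pd2_sub hU hw1 ((hw.add hW).mul ha) hq,
        pd2_mul hU (hw.add hW) ha hq, pd2_add hU hw hW hq]
  -- Step: mixed derivative of ω
  have hA : ∀ q ∈ U, pd2 (pd1 ω) q.1 q.2
      = ω q.1 q.2 * (pd1 φ q.1 q.2 * pd2 φ q.1 q.2 + pd2 (pd1 φ) q.1 q.2) := by
    intro q hq
    have b1 := big1 q hq
    have b2 : pd1 (pd2 Ω) q.1 q.2
        = -pd1 (pd2 ω) q.1 q.2 + ((pd1 ω q.1 q.2 - pd1 Ω q.1 q.2) * pd2 φ q.1 q.2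
          + (ω q.1 q.2 - Ω q.1 q.2) * pd1 (pd2 φ) q.1 q.2) := by
      have h1 : pd1 (pd2 Ω) q.1 q.2
          = pd1 (fun x y => -pd2 ω x y + (ω x y - Ω x y) * pd2 φ x y) q.1 q.2 :=
        pd1_congr hU heq2 hq
      rw [h1, pd1_add hU hw2.neg ((hw.sub hW).mul hb) hq, pd1_neg hU hw2 hq,
          pd1_mul hU (hw.sub hW) hb hq, pd1_sub hU hw hW hq]
    have cO := pd_comm hU hW hq
    have cw := pd_comm hU hw hq
    have cp := Cphi q hq
    have h1 := heq1 q hq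
    have h2 := heq2 q hq
    linear_combination (b2 - b1 + cO + cw + (Ω q.1 q.2 - ω q.1 q.2) * cp
      - pd2 φ q.1 q.2 * h1 + pd1 φ q.1 q.2 * h2) / 2
  -- quotient simplification
  have hB : ∀ q ∈ U, pd2 (pd1 ω) q.1 q.2 / ω q.1 q.2
      = pd1 φ q.1 q.2 * pd2 φ q.1 q.2 + pd2 (pd1 φ) q.1 q.2 := by
    intro q hq
    rw [hA q hq]
    exact mul_div_cancel_left₀ _ (hω0 q hq)
  intro p hp
  simp only [lapE, pd12]
  -- replace the quotient by H := a*b + c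
  have hQ1 : ∀ q ∈ U, pd1 (fun x y => pd2 (pd1 ω) x y / ω x y) q.1 q.2
      = pd1 (fun x y => pd1 φ x y * pd2 φ x y + pd2 (pd1 φ) x y) q.1 q.2 :=
    fun q hq => pd1_congr hU hB hq
  have hQ2 : ∀ q ∈ U, pd2 (fun x y => pd2 (pd1 ω) x y / ω x y) q.1 q.2
      = pd2 (fun x y => pd1 φ x y * pd2 φ x y + pd2 (pd1 φ) x y) q.1 q.2 :=
    fun q hq => pd2_congr hU hB hq
  have gQ1 : pd1 (pd1 (fun x y => pd2 (pd1 ω) x y / ω x y)) p.1 p.2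
      = pd1 (pd1 (fun x y => pd1 φ x y * pd2 φ x y + pd2 (pd1 φ) x y)) p.1 p.2 :=
    pd1_congr hU hQ1 hp
  have gQ2 : pd2 (pd2 (fun x y => pd2 (pd1 ω) x y / ω x y)) p.1 p.2
      = pd2 (pd2 (fun x y => pd1 φ x y * pd2 φ x y + pd2 (pd1 φ) x y)) p.1 p.2 :=
    pd2_congr hU hQ2 hp
  -- expansions of H derivatives
  have d1 : ∀ q ∈ U, pd1 (fun x y => pd1 φ x y * pd2 φ x y + pd2 (pd1 φ) x y) q.1 q.2
      = pd1 (pd1 φ) q.1 q.2 * pd2 φ q.1 q.2 + pd1 φ q.1 q.2 * pd1 (pd2 φ) q.1 q.2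
        + pd1 (pd2 (pd1 φ)) q.1 q.2 := by
    intro q hq
    rw [pd1_add hU (ha.mul hb) hc hq, pd1_mul hU ha hb hq]
  have d2 : ∀ q ∈ U, pd2 (fun x y => pd1 φ x y * pd2 φ x y + pd2 (pd1 φ) x y) q.1 q.2
      = pd2 (pd1 φ) q.1 q.2 * pd2 φ q.1 q.2 + pd1 φ q.1 q.2 * pd2 (pd2 φ) q.1 q.2
        + pd2 (pd2 (pd1 φ)) q.1 q.2 := by
    intro q hq
    rw [pd2_add hU (ha.mul hb) hc hq, pd2_mul hU ha hb hq]
  have EH1 : pd1 (pd1 (fun x y => pd1 φ x y * pd2 φ x y + pd2 (pd1 φ) x y)) p.1 p.2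
      = (pd1 (pd1 (pd1 φ)) p.1 p.2 * pd2 φ p.1 p.2 + pd1 (pd1 φ) p.1 p.2 * pd1 (pd2 φ) p.1 p.2)
        + (pd1 (pd1 φ) p.1 p.2 * pd1 (pd2 φ) p.1 p.2 + pd1 φ p.1 p.2 * pd1 (pd1 (pd2 φ)) p.1 p.2)
        + pd1 (pd1 (pd2 (pd1 φ))) p.1 p.2 := by
    have h1 : pd1 (pd1 (fun x y => pd1 φ x y * pd2 φ x y + pd2 (pd1 φ) x y)) p.1 p.2
        = pd1 (fun x y => pd1 (pd1 φ) x y * pd2 φ x y + pd1 φ x y * pd1 (pd2 φ) x y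
            + pd1 (pd2 (pd1 φ)) x y) p.1 p.2 := pd1_congr hU d1 hp
    rw [h1, pd1_add hU ((ha1.mul hb).add (ha.mul hb1)) hc1 hp,
        pd1_add hU (ha1.mul hb) (ha.mul hb1) hp,
        pd1_mul hU ha1 hb hp, pd1_mul hU ha hb1 hp]
  have EH2 : pd2 (pd2 (fun x y => pd1 φ x y * pd2 φ x y + pd2 (pd1 φ) x y)) p.1 p.2
      = (pd2 (pd2 (pd1 φ)) p.1 p.2 * pd2 φ p.1 p.2 + pd2 (pd1 φ) p.1 p.2 * pd2 (pd2 φ) p.1 p.2)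
        + (pd2 (pd1 φ) p.1 p.2 * pd2 (pd2 φ) p.1 p.2 + pd1 φ p.1 p.2 * pd2 (pd2 (pd2 φ)) p.1 p.2)
        + pd2 (pd2 (pd2 (pd1 φ))) p.1 p.2 := by
    have h1 : pd2 (pd2 (fun x y => pd1 φ x y * pd2 φ x y + pd2 (pd1 φ) x y)) p.1 p.2
        = pd2 (fun x y => pd2 (pd1 φ) x y * pd2 φ x y + pd1 φ x y * pd2 (pd2 φ) x y
            + pd2 (pd2 (pd1 φ)) x y) p.1 p.2 := pd2_congr hU d2 hp
    rw [h1, pd2_add hU ((hc.mul hb).add (ha.mul hb2)) hc2 hp,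
        pd2_add hU (hc.mul hb) (ha.mul hb2) hp,
        pd2_mul hU hc hb hp, pd2_mul hU ha hb2 hp]
  -- commutation normalizations at p
  have Ca : ∀ q ∈ U, pd2 (pd1 (pd1 φ)) q.1 q.2 = pd1 (pd2 (pd1 φ)) q.1 q.2 :=
    fun q hq => pd_comm hU ha hq
  have Cb : ∀ q ∈ U, pd2 (pd1 (pd2 φ)) q.1 q.2 = pd1 (pd2 (pd2 φ)) q.1 q.2 :=
    fun q hq => pd_comm hU hb hq
  have F1U : ∀ q ∈ U, pd2 (pd2 (pd1 φ)) q.1 q.2 = pd1 (pd2 (pd2 φ)) q.1 q.2 := by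
    intro q hq
    exact (pd2_congr hU Cphi hq).trans (Cb q hq)
  have F1 : pd2 (pd2 (pd1 φ)) p.1 p.2 = pd1 (pd2 (pd2 φ)) p.1 p.2 := F1U p hp
  have F2 : pd1 (pd1 (pd2 φ)) p.1 p.2 = pd2 (pd1 (pd1 φ)) p.1 p.2 := by
    have h1 : pd1 (pd1 (pd2 φ)) p.1 p.2 = pd1 (pd2 (pd1 φ)) p.1 p.2 :=
      pd1_congr hU (fun q hq => (Cphi q hq).symm) hp
    exact h1.trans (Ca p hp).symm
  have F3 : pd1 (pd1 (pd2 (pd1 φ))) p.1 p.2 = pd2 (pd1 (pd1 (pd1 φ))) p.1 p.2 := by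
    have h1 : pd1 (pd1 (pd2 (pd1 φ))) p.1 p.2 = pd1 (pd2 (pd1 (pd1 φ))) p.1 p.2 :=
      pd1_congr hU (fun q hq => (Ca q hq).symm) hp
    exact h1.trans (pd_comm hU ha1 hp).symm
  have F4 : pd2 (pd2 (pd2 (pd1 φ))) p.1 p.2 = pd2 (pd1 (pd2 (pd2 φ))) p.1 p.2 :=
    pd2_congr hU F1U hp
  have Cp : pd1 (pd2 φ) p.1 p.2 = pd2 (pd1 φ) p.1 p.2 := (Cphi p hp).symm
  -- derivatives of the Laplace identity
  have exp1U : ∀ q ∈ U,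
      pd1 (fun x y => pd1 (pd1 φ) x y + e1 * e2 * pd2 (pd2 φ) x y) q.1 q.2
      = pd1 (pd1 (pd1 φ)) q.1 q.2 + e1 * e2 * pd1 (pd2 (pd2 φ)) q.1 q.2 := by
    intro q hq
    rw [pd1_add hU ha1 (Sm.constMul (e1 * e2) hb2) hq, pd1_const_mul (e1 * e2) hU hb2 hq]
  have exp2U : ∀ q ∈ U,
      pd2 (fun x y => pd1 (pd1 φ) x y + e1 * e2 * pd2 (pd2 φ) x y) q.1 q.2
      = pd2 (pd1 (pd1 φ)) q.1 q.2 + e1 * e2 * pd2 (pd2 (pd2 φ)) q.1 q.2 := by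
    intro q hq
    rw [pd2_add hU ha1 (Sm.constMul (e1 * e2) hb2) hq, pd2_const_mul (e1 * e2) hU hb2 hq]
  have mm1 : ∀ q ∈ U,
      pd1 (fun x y => pd1 (pd1 φ) x y + e1 * e2 * pd2 (pd2 φ) x y) q.1 q.2
      = pd1 (fun x y => e2 / 2 * (Ω x y ^ 2 - ω x y ^ 2)) q.1 q.2 :=
    fun q hq => pd1_congr hU heq3 hq
  have mm2 : ∀ q ∈ U,
      pd2 (fun x y => pd1 (pd1 φ) x y + e1 * e2 * pd2 (pd2 φ) x y) q.1 q.2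
      = pd2 (fun x y => e2 / 2 * (Ω x y ^ 2 - ω x y ^ 2)) q.1 q.2 :=
    fun q hq => pd2_congr hU heq3 hq
  have mexp1 : ∀ q ∈ U, pd1 (fun x y => e2 / 2 * (Ω x y ^ 2 - ω x y ^ 2)) q.1 q.2
      = e2 / 2 * (2 * Ω q.1 q.2 * pd1 Ω q.1 q.2 - 2 * ω q.1 q.2 * pd1 ω q.1 q.2) := by
    intro q hq
    rw [pd1_const_mul (e2 / 2) hU (hW.sq.sub hw.sq) hq, pd1_sub hU hW.sq hw.sq hq,
        pd1_sq hU hW hq, pd1_sq hU hw hq]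
  have mexp2 : ∀ q ∈ U, pd2 (fun x y => e2 / 2 * (Ω x y ^ 2 - ω x y ^ 2)) q.1 q.2
      = e2 / 2 * (2 * Ω q.1 q.2 * pd2 Ω q.1 q.2 - 2 * ω q.1 q.2 * pd2 ω q.1 q.2) := by
    intro q hq
    rw [pd2_const_mul (e2 / 2) hU (hW.sq.sub hw.sq) hq, pd2_sub hU hW.sq hw.sq hq,
        pd2_sq hU hW hq, pd2_sq hU hw hq]
  have kk1 : pd1 (pd1 (pd1 φ)) p.1 p.2 + e1 * e2 * pd1 (pd2 (pd2 φ)) p.1 p.2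
      = e2 / 2 * (2 * Ω p.1 p.2 * pd1 Ω p.1 p.2 - 2 * ω p.1 p.2 * pd1 ω p.1 p.2) :=
    (exp1U p hp).symm.trans ((mm1 p hp).trans (mexp1 p hp))
  have kk2 : pd2 (pd1 (pd1 φ)) p.1 p.2 + e1 * e2 * pd2 (pd2 (pd2 φ)) p.1 p.2
      = e2 / 2 * (2 * Ω p.1 p.2 * pd2 Ω p.1 p.2 - 2 * ω p.1 p.2 * pd2 ω p.1 p.2) :=
    (exp2U p hp).symm.trans ((mm2 p hp).trans (mexp2 p hp))
  -- mixed second derivative of the Laplace identity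
  have hN : ∀ q ∈ U,
      (fun x y => pd1 (pd1 (pd1 φ)) x y + e1 * e2 * pd1 (pd2 (pd2 φ)) x y) q.1 q.2
      = (fun x y => e2 / 2 * (2 * Ω x y * pd1 Ω x y - 2 * ω x y * pd1 ω x y)) q.1 q.2 :=
    fun q hq => (exp1U q hq).symm.trans ((mm1 q hq).trans (mexp1 q hq))
  have kk4core : pd2 (fun x y => pd1 (pd1 (pd1 φ)) x y + e1 * e2 * pd1 (pd2 (pd2 φ)) x y) p.1 p.2
      = pd2 (fun x y => e2 / 2 * (2 * Ω x y * pd1 Ω x y - 2 * ω x y * pd1 ω x y)) p.1 p.2 :=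
    pd2_congr hU hN hp
  have kk4L : pd2 (fun x y => pd1 (pd1 (pd1 φ)) x y + e1 * e2 * pd1 (pd2 (pd2 φ)) x y) p.1 p.2
      = pd2 (pd1 (pd1 (pd1 φ))) p.1 p.2 + e1 * e2 * pd2 (pd1 (pd2 (pd2 φ))) p.1 p.2 := by
    rw [pd2_add hU ha11 (Sm.constMul (e1 * e2) hb21) hp, pd2_const_mul (e1 * e2) hU hb21 hp]
  have kk4R : pd2 (fun x y => e2 / 2 * (2 * Ω x y * pd1 Ω x y - 2 * ω x y * pd1 ω x y)) p.1 p.2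
      = e2 / 2 * (2 * (pd2 Ω p.1 p.2 * pd1 Ω p.1 p.2 + Ω p.1 p.2 * pd2 (pd1 Ω) p.1 p.2)
        - 2 * (pd2 ω p.1 p.2 * pd1 ω p.1 p.2 + ω p.1 p.2 * pd2 (pd1 ω) p.1 p.2)) := by
    rw [pd2_const_mul (e2 / 2) hU (((Sm.constMul 2 hW).mul hW1).sub ((Sm.constMul 2 hw).mul hw1)) hp,
        pd2_sub hU ((Sm.constMul 2 hW).mul hW1) ((Sm.constMul 2 hw).mul hw1) hp,
        pd2_mul hU (Sm.constMul 2 hW) hW1 hp, pd2_mul hU (Sm.constMul 2 hw) hw1 hp,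
        pd2_const_mul 2 hU hW hp, pd2_const_mul 2 hU hw hp]
    ring
  have kk4 : pd2 (pd1 (pd1 (pd1 φ))) p.1 p.2 + e1 * e2 * pd2 (pd1 (pd2 (pd2 φ))) p.1 p.2
      = e2 / 2 * (2 * (pd2 Ω p.1 p.2 * pd1 Ω p.1 p.2 + Ω p.1 p.2 * pd2 (pd1 Ω) p.1 p.2)
        - 2 * (pd2 ω p.1 p.2 * pd1 ω p.1 p.2 + ω p.1 p.2 * pd2 (pd1 ω) p.1 p.2)) :=
    kk4L.symm.trans (kk4core.trans kk4R)
  -- derivative of ω²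
  have sq1 : ∀ q ∈ U, pd1 (fun x y => ω x y ^ 2) q.1 q.2
      = 2 * ω q.1 q.2 * pd1 ω q.1 q.2 := fun q hq => pd1_sq hU hw hq
  have SS : pd2 (pd1 (fun x y => ω x y ^ 2)) p.1 p.2
      = 2 * (pd2 ω p.1 p.2 * pd1 ω p.1 p.2 + ω p.1 p.2 * pd2 (pd1 ω) p.1 p.2) := by
    have h1 : pd2 (pd1 (fun x y => ω x y ^ 2)) p.1 p.2
        = pd2 (fun x y => 2 * ω x y * pd1 ω x y) p.1 p.2 := pd2_congr hU sq1 hp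
    rw [h1, pd2_mul hU (Sm.constMul 2 hw) hw1 hp, pd2_const_mul 2 hU hw hp]
    ring
  -- final assembly
  rw [gQ1, gQ2, EH1, EH2, F1, F2, F3, F4, Cp, SS]
  linear_combination pd2 φ p.1 p.2 * kk1 + pd1 φ p.1 p.2 * kk2
    + 2 * pd2 (pd1 φ) p.1 p.2 * (heq3 p hp) + kk4
    + e2 * Ω p.1 p.2 * (big1 p hp) + e2 * (ω p.1 p.2 + Ω p.1 p.2) * (hA p hp)
    + e2 * (pd2 φ p.1 p.2 * Ω p.1 p.2 + pd2 Ω p.1 p.2) * (heq1 p hp)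
    + e2 * (pd1 ω p.1 p.2 - (ω p.1 p.2 + Ω p.1 p.2) * pd1 φ p.1 p.2) * (heq2 p hp)
end

section
/- Suppose smooth nonvanishing functions ω, Ω and a smooth function φ on an open set U ⊆ ℝ² satisfy ω,₁₂/ω = φ,₁₂ + φ,₁φ,₂, Ω,₁₂/Ω = −φ,₁₂ + φ,₁φ,₂, and Δ_ε φ = (ε₂/2)(Ω² − ω²). Then Δ_ε(ω,₁₂/ω) + ε₂(ω²),₁₂ = Δ_ε(Ω,₁₂/Ω) + ε₂(Ω²),₁₂; in particular, if ω solves the pseudo-Calapso equation then so does Ω. -/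
section CalapsoAux

/-- Smoothness exponent: `C^∞`. -/
abbrev sm : WithTop ℕ∞ := ((⊤ : ℕ∞) : WithTop ℕ∞)

/-- Directional derivative of a function on the plane. -/
noncomputable def dd (v : ℝ × ℝ) (F : ℝ × ℝ → ℝ) : ℝ × ℝ → ℝ := fun p => fderiv ℝ F p v

lemma dd_congrOn {U : Set (ℝ × ℝ)} (hU : IsOpen U) {F G : ℝ × ℝ → ℝ}
    (h : ∀ q ∈ U, F q = G q) {p : ℝ × ℝ} (hp : p ∈ U) (v : ℝ × ℝ) :
    dd v F p = dd v G p := by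
  have hev : F =ᶠ[nhds p] G := Filter.eventuallyEq_of_mem (hU.mem_nhds hp) h
  simp only [dd, hev.fderiv_eq]

lemma dd_smooth {U : Set (ℝ × ℝ)} (hU : IsOpen U) {F : ℝ × ℝ → ℝ}
    (hF : ContDiffOn ℝ sm F U) (v : ℝ × ℝ) : ContDiffOn ℝ sm (dd v F) U := by
  have h1 : ContDiffOn ℝ sm (fderiv ℝ F) U := hF.fderiv_of_isOpen hU (by simp)
  exact (ContinuousLinearMap.apply ℝ ℝ v).contDiff.comp_contDiffOn h1

lemma diffAt_of_smooth {U : Set (ℝ × ℝ)} (hU : IsOpen U) {F : ℝ × ℝ → ℝ}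
    (hF : ContDiffOn ℝ sm F U) {p : ℝ × ℝ} (hp : p ∈ U) : DifferentiableAt ℝ F p :=
  (hF.contDiffAt (hU.mem_nhds hp)).differentiableAt (by simp)

lemma dd_comm {U : Set (ℝ × ℝ)} (hU : IsOpen U) {F : ℝ × ℝ → ℝ}
    (hF : ContDiffOn ℝ sm F U) {p : ℝ × ℝ} (hp : p ∈ U) (v w : ℝ × ℝ) :
    dd v (dd w F) p = dd w (dd v F) p := by
  have hsym : IsSymmSndFDerivAt ℝ F p :=
    (hF.contDiffAt (hU.mem_nhds hp)).isSymmSndFDerivAt (by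
      rw [show (2 : WithTop ℕ∞) = ((2 : ℕ∞) : WithTop ℕ∞) from rfl]
      rw [minSmoothness_of_isRCLikeNormedField]
      exact WithTop.coe_le_coe.mpr (le_top : (2 : ℕ∞) ≤ ⊤))
  have hD : DifferentiableAt ℝ (fderiv ℝ F) p :=
    ((hF.contDiffAt (hU.mem_nhds hp)).fderiv_right (m := sm) (by simp)).differentiableAt
      (by simp)
  have key : ∀ a b : ℝ × ℝ, dd a (dd b F) p = fderiv ℝ (fderiv ℝ F) p a b := by
    intro a b
    have h0 : dd a (dd b F) p = fderiv ℝ (fun q => (fderiv ℝ F q) b) p a := rfl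
    rw [h0, fderiv_clm_apply hD (differentiableAt_const b)]
    simp
  rw [key, key, hsym v w]

lemma dd_combo {F G : ℝ × ℝ → ℝ} {p : ℝ × ℝ} (hF : DifferentiableAt ℝ F p)
    (hG : DifferentiableAt ℝ G p) (c : ℝ) (v : ℝ × ℝ) :
    dd v (fun q => F q + c * G q) p = dd v F p + c * dd v G p := by
  unfold dd
  rw [fderiv_fun_add hF (hG.const_mul c), fderiv_const_mul hG c]
  simp

lemma pd1_eq_dd {U : Set (ℝ × ℝ)} (hU : IsOpen U) {G : ℝ × ℝ → ℝ}
    (hG : ContDiffOn ℝ sm G U) {f : ℝ → ℝ → ℝ}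
    (hfG : ∀ q ∈ U, f q.1 q.2 = G q) :
    ∀ p ∈ U, pd1 f p.1 p.2 = dd (1, 0) G p := by
  rintro ⟨x, y⟩ hp
  have hGd : DifferentiableAt ℝ G (x, y) := diffAt_of_smooth hU hG hp
  have hline : HasDerivAt (fun t : ℝ => (t, y)) ((1 : ℝ), (0 : ℝ)) x :=
    (hasDerivAt_id x).prodMk (hasDerivAt_const x y)
  have h2 : HasDerivAt (fun t => G (t, y)) (fderiv ℝ G (x, y) (1, 0)) x :=
    hGd.hasFDerivAt.comp_hasDerivAt x hline
  have hop : IsOpen {t : ℝ | (t, y) ∈ U} :=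
    hU.preimage (by fun_prop : Continuous fun t : ℝ => (t, y))
  have hev : (fun t => f t y) =ᶠ[nhds x] fun t => G (t, y) := by
    filter_upwards [hop.mem_nhds hp] with t ht using hfG (t, y) ht
  show deriv (fun t => f t y) x = _
  rw [hev.deriv_eq, h2.deriv]; rfl

lemma pd2_eq_dd {U : Set (ℝ × ℝ)} (hU : IsOpen U) {G : ℝ × ℝ → ℝ}
    (hG : ContDiffOn ℝ sm G U) {f : ℝ → ℝ → ℝ}
    (hfG : ∀ q ∈ U, f q.1 q.2 = G q) :
    ∀ p ∈ U, pd2 f p.1 p.2 = dd (0, 1) G p := by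
  rintro ⟨x, y⟩ hp
  have hGd : DifferentiableAt ℝ G (x, y) := diffAt_of_smooth hU hG hp
  have hline : HasDerivAt (fun t : ℝ => (x, t)) ((0 : ℝ), (1 : ℝ)) y :=
    (hasDerivAt_const y x).prodMk (hasDerivAt_id y)
  have h2 : HasDerivAt (fun t => G (x, t)) (fderiv ℝ G (x, y) (0, 1)) y :=
    hGd.hasFDerivAt.comp_hasDerivAt y hline
  have hop : IsOpen {t : ℝ | (x, t) ∈ U} :=
    hU.preimage (by fun_prop : Continuous fun t : ℝ => (x, t))
  have hev : (fun t => f x t) =ᶠ[nhds y] fun t => G (x, t) := by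
    filter_upwards [hop.mem_nhds hp] with t ht using hfG (x, t) ht
  show deriv (fun t => f x t) y = _
  rw [hev.deriv_eq, h2.deriv]; rfl

lemma pd12_eq_dd {U : Set (ℝ × ℝ)} (hU : IsOpen U) {G : ℝ × ℝ → ℝ}
    (hG : ContDiffOn ℝ sm G U) {f : ℝ → ℝ → ℝ}
    (hfG : ∀ q ∈ U, f q.1 q.2 = G q) :
    ∀ p ∈ U, pd12 f p.1 p.2 = dd (0, 1) (dd (1, 0) G) p :=
  fun p hp => pd2_eq_dd hU (dd_smooth hU hG (1, 0)) (pd1_eq_dd hU hG hfG) p hp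

lemma lapE_eq_dd {U : Set (ℝ × ℝ)} (hU : IsOpen U) {G : ℝ × ℝ → ℝ}
    (hG : ContDiffOn ℝ sm G U) {f : ℝ → ℝ → ℝ}
    (hfG : ∀ q ∈ U, f q.1 q.2 = G q) (e : ℝ) :
    ∀ p ∈ U, lapE e f p.1 p.2
      = dd (1, 0) (dd (1, 0) G) p + e * dd (0, 1) (dd (0, 1) G) p := by
  intro p hp
  have h1 := pd1_eq_dd hU (dd_smooth hU hG (1, 0)) (pd1_eq_dd hU hG hfG) p hp
  have h2 := pd2_eq_dd hU (dd_smooth hU hG (0, 1)) (pd2_eq_dd hU hG hfG) p hp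
  show pd1 (pd1 f) p.1 p.2 + e * pd2 (pd2 f) p.1 p.2 = _
  rw [h1, h2]

end CalapsoAux

theorem Omega_solves_if_omega_does (e1 e2 : ℝ)
    (he1 : e1 = 1 ∨ e1 = -1) (he2 : e2 = 1 ∨ e2 = -1)
    (U : Set (ℝ × ℝ)) (hU : IsOpen U)
    (ω Ω φ : ℝ → ℝ → ℝ)
    (hω : ContDiffOn ℝ (⊤ : ℕ∞) (fun p : ℝ × ℝ => ω p.1 p.2) U)
    (hΩ : ContDiffOn ℝ (⊤ : ℕ∞) (fun p : ℝ × ℝ => Ω p.1 p.2) U)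
    (hφ : ContDiffOn ℝ (⊤ : ℕ∞) (fun p : ℝ × ℝ => φ p.1 p.2) U)
    (hω0 : ∀ p ∈ U, ω p.1 p.2 ≠ 0) (hΩ0 : ∀ p ∈ U, Ω p.1 p.2 ≠ 0)
    (hr1 : ∀ p ∈ U, pd12 ω p.1 p.2 / ω p.1 p.2
      = pd12 φ p.1 p.2 + pd1 φ p.1 p.2 * pd2 φ p.1 p.2)
    (hr2 : ∀ p ∈ U, pd12 Ω p.1 p.2 / Ω p.1 p.2
      = -pd12 φ p.1 p.2 + pd1 φ p.1 p.2 * pd2 φ p.1 p.2)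
    (heq3 : ∀ p ∈ U, lapE (e1 * e2) φ p.1 p.2
      = e2 / 2 * ((Ω p.1 p.2) ^ 2 - (ω p.1 p.2) ^ 2)) :
    (∀ p ∈ U,
      lapE (e1 * e2) (fun x y => pd12 ω x y / ω x y) p.1 p.2
          + e2 * pd12 (fun x y => (ω x y) ^ 2) p.1 p.2
        = lapE (e1 * e2) (fun x y => pd12 Ω x y / Ω x y) p.1 p.2
          + e2 * pd12 (fun x y => (Ω x y) ^ 2) p.1 p.2) ∧
    (PseudoCalapsoOn e1 e2 U ω → PseudoCalapsoOn e1 e2 U Ω) := by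
  have he22 : e2 * e2 = 1 := by rcases he2 with h | h <;> rw [h] <;> norm_num
  set e : ℝ := e1 * e2 with hedef
  -- downgrade analyticity to smoothness
  have hφ' : ContDiffOn ℝ sm (fun q : ℝ × ℝ => φ q.1 q.2) U := hφ.of_le (by simp)
  have hω' : ContDiffOn ℝ sm (fun q : ℝ × ℝ => ω q.1 q.2) U := hω.of_le (by simp)
  have hΩ' : ContDiffOn ℝ sm (fun q : ℝ × ℝ => Ω q.1 q.2) U := hΩ.of_le (by simp)
  set F : ℝ × ℝ → ℝ := fun q => φ q.1 q.2 with hFdef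
  -- basic translations for φ
  have hpd1φ : ∀ q ∈ U, pd1 φ q.1 q.2 = dd (1, 0) F q :=
    pd1_eq_dd hU hφ' (fun q _ => rfl)
  have hpd2φ : ∀ q ∈ U, pd2 φ q.1 q.2 = dd (0, 1) F q :=
    pd2_eq_dd hU hφ' (fun q _ => rfl)
  have hpd12φ : ∀ q ∈ U, pd12 φ q.1 q.2 = dd (0, 1) (dd (1, 0) F) q :=
    pd12_eq_dd hU hφ' (fun q _ => rfl)
  -- the relevant auxiliary functions
  set P : ℝ × ℝ → ℝ := dd (0, 1) (dd (1, 0) F) with hPdef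
  set A : ℝ × ℝ → ℝ := dd (1, 0) (dd (1, 0) F) with hAdef
  set B : ℝ × ℝ → ℝ := dd (0, 1) (dd (0, 1) F) with hBdef
  set H : ℝ × ℝ → ℝ := fun q => P q + dd (1, 0) F q * dd (0, 1) F q with hHdef
  set K : ℝ × ℝ → ℝ := fun q => -P q + dd (1, 0) F q * dd (0, 1) F q with hKdef
  set L : ℝ × ℝ → ℝ := fun q => A q + e * B q with hLdef
  set W2 : ℝ × ℝ → ℝ := fun q => (ω q.1 q.2) ^ 2 with hW2def
  set O2 : ℝ × ℝ → ℝ := fun q => (Ω q.1 q.2) ^ 2 with hO2def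
  -- smoothness of auxiliaries
  have hPs : ContDiffOn ℝ sm P U := dd_smooth hU (dd_smooth hU hφ' (1, 0)) (0, 1)
  have hAs : ContDiffOn ℝ sm A U := dd_smooth hU (dd_smooth hU hφ' (1, 0)) (1, 0)
  have hBs : ContDiffOn ℝ sm B U := dd_smooth hU (dd_smooth hU hφ' (0, 1)) (0, 1)
  have hQs : ContDiffOn ℝ sm (fun q => dd (1, 0) F q * dd (0, 1) F q) U :=
    (dd_smooth hU hφ' (1, 0)).mul (dd_smooth hU hφ' (0, 1))
  have hHs : ContDiffOn ℝ sm H U := hPs.add hQs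
  have hKs : ContDiffOn ℝ sm K U := hPs.neg.add hQs
  have hLs : ContDiffOn ℝ sm L U := hAs.add (contDiffOn_const.mul hBs)
  have hW2s : ContDiffOn ℝ sm W2 U := hω'.pow 2
  have hO2s : ContDiffOn ℝ sm O2 U := hΩ'.pow 2
  -- the two quotients agree with H and K on U
  have hg : ∀ q ∈ U, pd12 ω q.1 q.2 / ω q.1 q.2 = H q := by
    intro q hq
    rw [hr1 q hq, hpd12φ q hq, hpd1φ q hq, hpd2φ q hq]
  have hG : ∀ q ∈ U, pd12 Ω q.1 q.2 / Ω q.1 q.2 = K q := by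
    intro q hq
    rw [hr2 q hq, hpd12φ q hq, hpd1φ q hq, hpd2φ q hq]
  -- translate the Laplacians
  have hlapg := lapE_eq_dd hU hHs (f := fun x y => pd12 ω x y / ω x y) hg e
  have hlapG := lapE_eq_dd hU hKs (f := fun x y => pd12 Ω x y / Ω x y) hG e
  have hlapφ : ∀ q ∈ U, lapE e φ q.1 q.2 = L q := by
    intro q hq
    rw [lapE_eq_dd hU hφ' (fun q _ => rfl) e q hq]
  -- translate the second mixed partials of the squares
  have hpdW2 := pd12_eq_dd hU hW2s (f := fun x y => (ω x y) ^ 2) (fun q _ => rfl)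
  have hpdO2 := pd12_eq_dd hU hO2s (f := fun x y => (Ω x y) ^ 2) (fun q _ => rfl)
  -- heq3 in dd language
  have hWO : ∀ q ∈ U, W2 q = O2 q + (-(2 * e2)) * L q := by
    intro q hq
    have h3 := heq3 q hq
    rw [hlapφ q hq] at h3
    have : W2 q = (ω q.1 q.2) ^ 2 := rfl
    have hO : O2 q = (Ω q.1 q.2) ^ 2 := rfl
    rw [this, hO]
    linear_combination 2 * e2 * h3 + ((Ω q.1 q.2) ^ 2 - (ω q.1 q.2) ^ 2) * he22
  -- now fix a point
  have main : ∀ p ∈ U,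
      lapE e (fun x y => pd12 ω x y / ω x y) p.1 p.2
          + e2 * pd12 (fun x y => (ω x y) ^ 2) p.1 p.2
        = lapE e (fun x y => pd12 Ω x y / Ω x y) p.1 p.2
          + e2 * pd12 (fun x y => (Ω x y) ^ 2) p.1 p.2 := by
    intro p hp
    -- expand H in terms of K
    have hHK : ∀ q ∈ U, H q = K q + 2 * P q := by
      intro q _; rw [hHdef, hKdef]; ring
    have hH1 : ∀ q ∈ U, dd (1, 0) H q = dd (1, 0) K q + 2 * dd (1, 0) P q := by
      intro q hq
      rw [dd_congrOn (G := fun q => K q + 2 * P q) hU hHK hq (1, 0),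
        dd_combo (diffAt_of_smooth hU hKs hq) (diffAt_of_smooth hU hPs hq) 2 (1, 0)]
    have hH2 : ∀ q ∈ U, dd (0, 1) H q = dd (0, 1) K q + 2 * dd (0, 1) P q := by
      intro q hq
      rw [dd_congrOn (G := fun q => K q + 2 * P q) hU hHK hq (0, 1),
        dd_combo (diffAt_of_smooth hU hKs hq) (diffAt_of_smooth hU hPs hq) 2 (0, 1)]
    have hH11 : dd (1, 0) (dd (1, 0) H) p
        = dd (1, 0) (dd (1, 0) K) p + 2 * dd (1, 0) (dd (1, 0) P) p := by
      rw [dd_congrOn (G := fun q => dd (1, 0) K q + 2 * dd (1, 0) P q) hU hH1 hp (1, 0),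
        dd_combo (diffAt_of_smooth hU (dd_smooth hU hKs (1, 0)) hp)
          (diffAt_of_smooth hU (dd_smooth hU hPs (1, 0)) hp) 2 (1, 0)]
    have hH22 : dd (0, 1) (dd (0, 1) H) p
        = dd (0, 1) (dd (0, 1) K) p + 2 * dd (0, 1) (dd (0, 1) P) p := by
      rw [dd_congrOn (G := fun q => dd (0, 1) K q + 2 * dd (0, 1) P q) hU hH2 hp (0, 1),
        dd_combo (diffAt_of_smooth hU (dd_smooth hU hKs (0, 1)) hp)
          (diffAt_of_smooth hU (dd_smooth hU hPs (0, 1)) hp) 2 (0, 1)]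
    -- expand W2 in terms of O2 and L
    have hW1 : ∀ q ∈ U, dd (1, 0) W2 q = dd (1, 0) O2 q + (-(2 * e2)) * dd (1, 0) L q := by
      intro q hq
      rw [dd_congrOn (G := fun q => O2 q + (-(2 * e2)) * L q) hU hWO hq (1, 0),
        dd_combo (diffAt_of_smooth hU hO2s hq) (diffAt_of_smooth hU hLs hq) _ (1, 0)]
    have hW12 : dd (0, 1) (dd (1, 0) W2) p
        = dd (0, 1) (dd (1, 0) O2) p + (-(2 * e2)) * dd (0, 1) (dd (1, 0) L) p := by
      rw [dd_congrOn (G := fun q => dd (1, 0) O2 q + (-(2 * e2)) * dd (1, 0) L q)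
          hU hW1 hp (0, 1),
        dd_combo (diffAt_of_smooth hU (dd_smooth hU hO2s (1, 0)) hp)
          (diffAt_of_smooth hU (dd_smooth hU hLs (1, 0)) hp) _ (0, 1)]
    -- expand L
    have hL1 : ∀ q ∈ U, dd (1, 0) L q = dd (1, 0) A q + e * dd (1, 0) B q := by
      intro q hq
      rw [hLdef, dd_combo (diffAt_of_smooth hU hAs hq) (diffAt_of_smooth hU hBs hq) e (1, 0)]
    have hL12 : dd (0, 1) (dd (1, 0) L) p
        = dd (0, 1) (dd (1, 0) A) p + e * dd (0, 1) (dd (1, 0) B) p := by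
      rw [dd_congrOn (G := fun q => dd (1, 0) A q + e * dd (1, 0) B q) hU hL1 hp (0, 1),
        dd_combo (diffAt_of_smooth hU (dd_smooth hU hAs (1, 0)) hp)
          (diffAt_of_smooth hU (dd_smooth hU hBs (1, 0)) hp) e (0, 1)]
    -- commutation relations
    have hc1 : dd (1, 0) (dd (1, 0) P) p = dd (0, 1) (dd (1, 0) A) p := by
      have hstep : ∀ q ∈ U, dd (1, 0) P q = dd (0, 1) A q := by
        intro q hq
        rw [hPdef, hAdef]
        exact dd_comm hU (dd_smooth hU hφ' (1, 0)) hq (1, 0) (0, 1)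
      rw [dd_congrOn (G := dd (0, 1) A) hU hstep hp (1, 0)]
      exact dd_comm hU hAs hp (1, 0) (0, 1)
    have hc2 : dd (0, 1) (dd (0, 1) P) p = dd (0, 1) (dd (1, 0) B) p := by
      have hPalt : ∀ q ∈ U, P q = dd (1, 0) (dd (0, 1) F) q := by
        intro q hq
        rw [hPdef]
        exact dd_comm hU hφ' hq (0, 1) (1, 0)
      have hstep : ∀ q ∈ U, dd (0, 1) P q = dd (1, 0) B q := by
        intro q hq
        rw [dd_congrOn (G := dd (1, 0) (dd (0, 1) F)) hU hPalt hq (0, 1), hBdef]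
        exact dd_comm hU (dd_smooth hU hφ' (0, 1)) hq (0, 1) (1, 0)
      exact dd_congrOn (G := dd (1, 0) B) hU hstep hp (0, 1)
    -- put everything together
    rw [hlapg p hp, hlapG p hp, hpdW2 p hp, hpdO2 p hp, hW12, hL12, hH11, hH22, hc1, hc2]
    linear_combination
      (-(2 * dd (0, 1) (dd (1, 0) A) p + 2 * e * dd (0, 1) (dd (1, 0) B) p)) * he22
  refine ⟨main, ?_⟩
  intro hωsol p hp
  have := hωsol p hp
  rw [main p hp] at this
  exact this
end

section
/- Let h₁(u₁) and h₂(u₂) be smooth real functions of one variable with h₁(u₁) ≠ h₂(u₂) for all (u₁,u₂) in an open connected set U ⊆ ℝ², and suppose h₁' is nonvanishing. If they satisfy the Gauss equation h₁h₂ + ε₂h₂''(h₁−h₂) + ε₁h₁''(h₂−h₁) + ε₁(h₁')² + ε₂(h₂')² = 0 on U, then there exist constants b₁ and c₁ such that h₁'' − ε₁b₁h₁ = c₁ and h₂'' + ε₂(1+b₁)h₂ = −ε₁ε₂c₁. -/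
-- helper 1: constancy on open connected set for a function of first coordinate
lemma constOnAux {U : Set (ℝ × ℝ)} (hUo : IsOpen U) (hUc : IsConnected U)
    {f : ℝ → ℝ} (hf : ∀ p ∈ U, HasDerivAt f 0 p.1) :
    ∃ c : ℝ, ∀ p ∈ U, f p.1 = c := by
  have loc : ∀ p ∈ U, ∃ r > 0, Metric.ball p r ⊆ U ∧
      ∀ q ∈ Metric.ball p r, f q.1 = f p.1 := by
    intro p hp
    obtain ⟨r, hr, hball⟩ := Metric.isOpen_iff.mp hUo p hp
    have key : ∀ x ∈ Metric.ball p.1 r, HasDerivAt f 0 x := by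
      intro x hx
      refine hf (x, p.2) (hball ?_)
      simp only [Metric.mem_ball] at hx ⊢
      rw [Prod.dist_eq]
      simp only [dist_self]
      exact max_lt hx hr
    have hfd : ∀ x ∈ Metric.ball p.1 r, fderivWithin ℝ f (Metric.ball p.1 r) x = 0 := by
      intro x hx
      have h0 : HasFDerivAt f (0 : ℝ →L[ℝ] ℝ) x := by
        have h := (key x hx).hasFDerivAt
        refine h.congr_fderiv ?_
        refine ContinuousLinearMap.ext fun v => ?_
        simp
      rw [fderivWithin_of_isOpen Metric.isOpen_ball hx, h0.fderiv]
    refine ⟨r, hr, hball, fun q hq => ?_⟩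
    have hq1 : q.1 ∈ Metric.ball p.1 r := by
      simp only [Metric.mem_ball] at hq ⊢
      exact lt_of_le_of_lt (by rw [Prod.dist_eq]; exact le_max_left _ _) hq
    exact (convex_ball p.1 r).is_const_of_fderivWithin_eq_zero
      (fun x hx => (key x hx).differentiableAt.differentiableWithinAt) hfd hq1
      (Metric.mem_ball_self hr)
  obtain ⟨p₀, hp₀⟩ := hUc.nonempty
  refine ⟨f p₀.1, ?_⟩
  set A : Set (ℝ × ℝ) := {p | p ∈ U ∧ f p.1 = f p₀.1} with hAdef
  set B : Set (ℝ × ℝ) := {p | p ∈ U ∧ f p.1 ≠ f p₀.1} with hBdef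
  have hA : IsOpen A := by
    rw [Metric.isOpen_iff]
    rintro p ⟨hpU, hpc⟩
    obtain ⟨r, hr, hball, hconst⟩ := loc p hpU
    exact ⟨r, hr, fun q hq => ⟨hball hq, by rw [hconst q hq, hpc]⟩⟩
  have hB : IsOpen B := by
    rw [Metric.isOpen_iff]
    rintro p ⟨hpU, hpc⟩
    obtain ⟨r, hr, hball, hconst⟩ := loc p hpU
    exact ⟨r, hr, fun q hq => ⟨hball hq, by rw [hconst q hq]; exact hpc⟩⟩
  have hsub : U ⊆ A ∪ B := by
    intro p hp
    by_cases h : f p.1 = f p₀.1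
    · exact Or.inl ⟨hp, h⟩
    · exact Or.inr ⟨hp, h⟩
  have hdisj : Disjoint A B := by
    rw [Set.disjoint_left]
    rintro p ⟨_, hpc⟩ ⟨_, hpc'⟩
    exact hpc' hpc
  have := hUc.isPreconnected.subset_left_of_subset_union hA hB hdisj hsub
    ⟨p₀, hp₀, hp₀, rfl⟩
  exact fun p hp => (this hp).2

-- helper 2: x-partial derivative of a function vanishing on open set vanishes
lemma derivZeroAux {U : Set (ℝ × ℝ)} (hUo : IsOpen U)
    {F Fx : ℝ → ℝ → ℝ}
    (hF : ∀ p ∈ U, HasDerivAt (fun x => F x p.2) (Fx p.1 p.2) p.1)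
    (h0 : ∀ p ∈ U, F p.1 p.2 = 0) : ∀ p ∈ U, Fx p.1 p.2 = 0 := by
  intro p hp
  have hev : (fun x => F x p.2) =ᶠ[nhds p.1] (fun _ => (0:ℝ)) := by
    have hc : Continuous (fun x : ℝ => (x, p.2)) := continuous_id.prodMk continuous_const
    have hmem : ∀ᶠ x in nhds p.1, (x, p.2) ∈ U :=
      hc.continuousAt.preimage_mem_nhds (hUo.mem_nhds hp)
    filter_upwards [hmem] with x hx using h0 (x, p.2) hx
  have h1 : deriv (fun x => F x p.2) p.1 = 0 := by
    rw [hev.deriv_eq]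
    simp
  rw [← (hF p hp).deriv]
  exact h1

theorem gauss_forces_odes (e1 e2 : ℝ)
    (he1 : e1 = 1 ∨ e1 = -1) (he2 : e2 = 1 ∨ e2 = -1)
    (U : Set (ℝ × ℝ)) (hUo : IsOpen U) (hUc : IsConnected U)
    (h1 h2 : ℝ → ℝ) (hs1 : ContDiff ℝ (⊤ : ℕ∞) h1) (hs2 : ContDiff ℝ (⊤ : ℕ∞) h2)
    (hne : ∀ p ∈ U, h1 p.1 ≠ h2 p.2)
    (hd1 : ∀ p ∈ U, deriv h1 p.1 ≠ 0)
    (hgauss : ∀ p ∈ U,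
      h1 p.1 * h2 p.2 + e2 * deriv (deriv h2) p.2 * (h1 p.1 - h2 p.2)
        + e1 * deriv (deriv h1) p.1 * (h2 p.2 - h1 p.1)
        + e1 * (deriv h1 p.1) ^ 2 + e2 * (deriv h2 p.2) ^ 2 = 0) :
    ∃ b1 c1 : ℝ,
      (∀ p ∈ U, deriv (deriv h1) p.1 - e1 * b1 * h1 p.1 = c1) ∧
      (∀ p ∈ U, deriv (deriv h2) p.2 + e2 * (1 + b1) * h2 p.2 = -(e1 * e2) * c1) := by
  have he1s : e1 * e1 = 1 := by rcases he1 with rfl | rfl <;> norm_num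
  have he2s : e2 * e2 = 1 := by rcases he2 with rfl | rfl <;> norm_num
  have he1z : e1 ≠ 0 := by rcases he1 with rfl | rfl <;> norm_num
  -- differentiability ladder
  have hs1' : ContDiff ℝ (((⊤ : ℕ∞) : WithTop ℕ∞)) h1 := hs1.of_le (by simp)
  obtain ⟨hD1, hc2⟩ := contDiff_infty_iff_deriv.mp hs1'
  obtain ⟨hDd1, hc3⟩ := contDiff_infty_iff_deriv.mp hc2
  obtain ⟨hDd2, hc4⟩ := contDiff_infty_iff_deriv.mp hc3
  obtain ⟨hDd3, _⟩ := contDiff_infty_iff_deriv.mp hc4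
  set d1 : ℝ → ℝ := deriv h1 with hd1e
  set d2 : ℝ → ℝ := deriv d1 with hd2e
  set d3 : ℝ → ℝ := deriv d2 with hd3e
  set d4 : ℝ → ℝ := deriv d3 with hd4e
  set k1 : ℝ → ℝ := deriv h2 with hk1e
  set k2 : ℝ → ℝ := deriv k1 with hk2e
  have H1 : ∀ x : ℝ, HasDerivAt h1 (d1 x) x := fun x => (hD1 x).hasDerivAt
  have Hd1 : ∀ x : ℝ, HasDerivAt d1 (d2 x) x := fun x => (hDd1 x).hasDerivAt
  have Hd2 : ∀ x : ℝ, HasDerivAt d2 (d3 x) x := fun x => (hDd2 x).hasDerivAt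
  have Hd3 : ∀ x : ℝ, HasDerivAt d3 (d4 x) x := fun x => (hDd3 x).hasDerivAt
  -- first x-derivative of the Gauss equation
  have hGx : ∀ p ∈ U, d1 p.1 * (h2 p.2 + e2 * k2 p.2 + e1 * d2 p.1)
      + e1 * d3 p.1 * (h2 p.2 - h1 p.1) = 0 := by
    have hF : ∀ p ∈ U, HasDerivAt
        (fun x => h1 x * h2 p.2 + e2 * k2 p.2 * (h1 x - h2 p.2)
          + e1 * d2 x * (h2 p.2 - h1 x) + e1 * (d1 x) ^ 2 + e2 * (k1 p.2) ^ 2)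
        (d1 p.1 * (h2 p.2 + e2 * k2 p.2 + e1 * d2 p.1)
          + e1 * d3 p.1 * (h2 p.2 - h1 p.1)) p.1 := by
      intro p _
      have A1 := (H1 p.1).mul_const (h2 p.2)
      have A2 := ((H1 p.1).sub_const (h2 p.2)).const_mul (e2 * k2 p.2)
      have A3 := ((Hd2 p.1).const_mul e1).mul ((H1 p.1).const_sub (h2 p.2))
      have A4 := ((Hd1 p.1).pow 2).const_mul e1
      have A5 := hasDerivAt_const p.1 (e2 * (k1 p.2) ^ 2)
      refine ((((A1.add A2).add A3).add A4).add A5).congr_deriv ?_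
      push_cast
      ring
    exact derivZeroAux hUo
      (F := fun x y => h1 x * h2 y + e2 * k2 y * (h1 x - h2 y)
        + e1 * d2 x * (h2 y - h1 x) + e1 * (d1 x) ^ 2 + e2 * (k1 y) ^ 2)
      (Fx := fun x y => d1 x * (h2 y + e2 * k2 y + e1 * d2 x)
        + e1 * d3 x * (h2 y - h1 x)) hF hgauss
  -- second x-derivative
  have hGxx : ∀ p ∈ U, d2 p.1 * (h2 p.2 + e2 * k2 p.2 + e1 * d2 p.1)
      + e1 * d4 p.1 * (h2 p.2 - h1 p.1) = 0 := by
    have hF : ∀ p ∈ U, HasDerivAt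
        (fun x => d1 x * (h2 p.2 + e2 * k2 p.2 + e1 * d2 x)
          + e1 * d3 x * (h2 p.2 - h1 x))
        (d2 p.1 * (h2 p.2 + e2 * k2 p.2 + e1 * d2 p.1)
          + e1 * d4 p.1 * (h2 p.2 - h1 p.1)) p.1 := by
      intro p _
      have B1 := (Hd1 p.1).mul
        ((hasDerivAt_const p.1 (h2 p.2 + e2 * k2 p.2)).add ((Hd2 p.1).const_mul e1))
      have B2 := ((Hd3 p.1).const_mul e1).mul ((H1 p.1).const_sub (h2 p.2))
      refine (B1.add B2).congr_deriv ?_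
      simp only [Pi.add_apply]
      ring
    exact derivZeroAux hUo
      (F := fun x y => d1 x * (h2 y + e2 * k2 y + e1 * d2 x)
        + e1 * d3 x * (h2 y - h1 x))
      (Fx := fun x y => d2 x * (h2 y + e2 * k2 y + e1 * d2 x)
        + e1 * d4 x * (h2 y - h1 x)) hF hGx
  -- Wronskian-type identity
  have hW : ∀ p ∈ U, d4 p.1 * d1 p.1 - d3 p.1 * d2 p.1 = 0 := by
    intro p hp
    have hxe := hGx p hp
    have hxx := hGxx p hp
    have hΔ : h2 p.2 - h1 p.1 ≠ 0 := sub_ne_zero.mpr (hne p hp).symm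
    have key : e1 * ((h2 p.2 - h1 p.1) * (d4 p.1 * d1 p.1 - d3 p.1 * d2 p.1)) = 0 := by
      linear_combination d1 p.1 * hxx - d2 p.1 * hxe
    have := (mul_eq_zero.mp key).resolve_left he1z
    exact (mul_eq_zero.mp this).resolve_left hΔ
  -- b1 : the constant e1 * d3 / d1
  obtain ⟨b1, hb⟩ := constOnAux hUo hUc (f := fun x => e1 * (d3 x / d1 x)) (by
    intro p hp
    have hdne := hd1 p hp
    have hdiv := (Hd3 p.1).div (Hd1 p.1) hdne
    have := hdiv.const_mul e1
    refine this.congr_deriv ?_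
    rw [hW p hp]
    simp)
  have hd3eq : ∀ p ∈ U, d3 p.1 = e1 * b1 * d1 p.1 := by
    intro p hp
    have hdne := hd1 p hp
    have h' : d3 p.1 / d1 p.1 = e1 * b1 := by
      linear_combination e1 * (hb p hp) - (d3 p.1 / d1 p.1) * he1s
    rw [div_eq_iff hdne] at h'
    linarith [h']
  -- c1 : the constant d2 - e1 * b1 * h1
  obtain ⟨c1, hc⟩ := constOnAux hUo hUc (f := fun x => d2 x - e1 * b1 * h1 x) (by
    intro p hp
    have := (Hd2 p.1).sub ((H1 p.1).const_mul (e1 * b1))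
    refine this.congr_deriv ?_
    rw [hd3eq p hp]
    ring)
  refine ⟨b1, c1, fun p hp => hc p hp, ?_⟩
  intro p hp
  have hx := hGx p hp
  have h3 := hd3eq p hp
  have h4 := hc p hp
  have hdne := hd1 p hp
  have key0 : d1 p.1 * (k2 p.2 + e2 * (1 + b1) * h2 p.2 + e1 * e2 * c1) = 0 := by
    linear_combination e2 * hx - e1 * e2 * d1 p.1 * h4
      - e1 * e2 * (h2 p.2 - h1 p.1) * h3
      - e2 * b1 * d1 p.1 * h2 p.2 * he1s - d1 p.1 * k2 p.2 * he2s
  have hz := (mul_eq_zero.mp key0).resolve_left hdne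
  linarith [hz]
end

section
/- Let c₁, A₅, A₆, A₇, A₈ be real constants and ε₁, ε₂ ∈ {-1,1} with ε₂ = 1, satisfying ε₁A₅² − c₁² − 2ε₁c₁A₆ + A₇² + A₈² = 0. Define h₁(u₁) = (c₁/2)u₁² + A₅u₁ + A₆ and h₂(u₂) = −ε₁c₁ + A₇cos(u₂) + A₈sin(u₂). Then h₁ and h₂ satisfy the Gauss equation h₁h₂ + ε₂h₂''(h₁−h₂) + ε₁h₁''(h₂−h₁) + ε₁(h₁')² + ε₂(h₂')² = 0 identically. -/
noncomputable def h1ex5 (c1 A5 A6 : ℝ) : ℝ → ℝ := fun t => c1 / 2 * t ^ 2 + A5 * t + A6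

noncomputable def h2ex5 (e1 c1 A7 A8 : ℝ) : ℝ → ℝ :=
  fun t => -e1 * c1 + A7 * Real.cos t + A8 * Real.sin t

lemma deriv_h1ex5 (c1 A5 A6 : ℝ) : deriv (h1ex5 c1 A5 A6) = fun t => c1 * t + A5 := by
  funext t
  have : HasDerivAt (h1ex5 c1 A5 A6) (c1 / 2 * (2 * t ^ 1) + A5 * 1 + 0) t := by
    unfold h1ex5
    exact (((hasDerivAt_pow 2 t).const_mul (c1 / 2)).add ((hasDerivAt_id t).const_mul A5)).add
      (hasDerivAt_const t A6)
  rw [this.deriv]; ring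

lemma deriv_h2ex5 (e1 c1 A7 A8 : ℝ) :
    deriv (h2ex5 e1 c1 A7 A8) = fun t => -A7 * Real.sin t + A8 * Real.cos t := by
  funext t
  have : HasDerivAt (h2ex5 e1 c1 A7 A8) (0 + A7 * -Real.sin t + A8 * Real.cos t) t := by
    unfold h2ex5
    exact ((hasDerivAt_const t (-e1 * c1)).add ((Real.hasDerivAt_cos t).const_mul A7)).add
      ((Real.hasDerivAt_sin t).const_mul A8)
  rw [this.deriv]; ring

lemma deriv2_h2ex5 (e1 c1 A7 A8 : ℝ) :
    deriv (deriv (h2ex5 e1 c1 A7 A8)) = fun t => -A7 * Real.cos t - A8 * Real.sin t := by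
  rw [deriv_h2ex5]
  funext t
  have : HasDerivAt (fun t => -A7 * Real.sin t + A8 * Real.cos t)
      (-A7 * Real.cos t + A8 * -Real.sin t) t :=
    ((Real.hasDerivAt_sin t).const_mul (-A7)).add ((Real.hasDerivAt_cos t).const_mul A8)
  rw [this.deriv]; ring

theorem example_b1_zero_satisfies_gauss (e1 e2 : ℝ)
    (he1 : e1 = 1 ∨ e1 = -1) (he2 : e2 = 1)
    (c1 A5 A6 A7 A8 : ℝ)
    (hconstraint : e1 * A5 ^ 2 - c1 ^ 2 - 2 * e1 * c1 * A6 + A7 ^ 2 + A8 ^ 2 = 0) :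
    ∀ u1 u2 : ℝ,
      h1ex5 c1 A5 A6 u1 * h2ex5 e1 c1 A7 A8 u2
        + e2 * deriv (deriv (h2ex5 e1 c1 A7 A8)) u2 * (h1ex5 c1 A5 A6 u1 - h2ex5 e1 c1 A7 A8 u2)
        + e1 * deriv (deriv (h1ex5 c1 A5 A6)) u1 * (h2ex5 e1 c1 A7 A8 u2 - h1ex5 c1 A5 A6 u1)
        + e1 * (deriv (h1ex5 c1 A5 A6) u1) ^ 2
        + e2 * (deriv (h2ex5 e1 c1 A7 A8) u2) ^ 2 = 0 := by
  intro u1 u2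
  have h1'' : deriv (deriv (h1ex5 c1 A5 A6)) = fun _ => c1 := by
    rw [deriv_h1ex5]; funext t
    have : HasDerivAt (fun t => c1 * t + A5) (c1 * 1 + 0) t :=
      ((hasDerivAt_id t).const_mul c1).add (hasDerivAt_const t A5)
    rw [this.deriv]; ring
  rw [h1'', deriv2_h2ex5, deriv_h1ex5, deriv_h2ex5]
  have he1sq : e1 ^ 2 = 1 := by rcases he1 with h | h <;> rw [h] <;> ring
  have hs : Real.sin u2 ^ 2 + Real.cos u2 ^ 2 = 1 := Real.sin_sq_add_cos_sq u2
  unfold h1ex5 h2ex5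
  simp only [he2]
  nlinarith [sq_nonneg (Real.sin u2), sq_nonneg (Real.cos u2), hconstraint, he1sq, hs,
    mul_self_nonneg u1]
end

section
/- Let ε₁, ε₂ ∈ {-1,1}, b₁ ≠ 0 with 1+b₁ ≠ 0, and complex or real constants c₁, A₁, A₂, A₃, A₄ satisfying c₁² − 4b₁(1+b₁)(b₁A₁A₂ − (1+b₁)A₃A₄) = 0. Define h₁(u₁) = −ε₁c₁/b₁ + A₁e^{√(b₁ε₁)u₁} + A₂e^{−√(b₁ε₁)u₁} and h₂(u₂) = −ε₁c₁/(1+b₁) + A₃e^{√(−ε₂(1+b₁))u₂} + A₄e^{−√(−ε₂(1+b₁))u₂}, assuming b₁ε₁ > 0 and −ε₂(1+b₁) > 0 so that the square roots are real. Then h₁ and h₂ satisfy h₁h₂ + ε₂h₂''(h₁−h₂) + ε₁h₁''(h₂−h₁) + ε₁(h₁')² + ε₂(h₂')² = 0 identically on ℝ². -/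
lemma deriv_gen (C A B k : ℝ) :
    deriv (fun t => C + A * Real.exp (k * t) + B * Real.exp (-k * t))
      = fun t => A * k * Real.exp (k * t) - B * k * Real.exp (-k * t) := by
  funext t
  have h1 : HasDerivAt (fun t : ℝ => k * t) k t := by
    simpa using (hasDerivAt_id t).const_mul k
  have h2 : HasDerivAt (fun t : ℝ => -k * t) (-k) t := by
    simpa using (hasDerivAt_id t).const_mul (-k)
  have H : HasDerivAt (fun t => C + A * Real.exp (k * t) + B * Real.exp (-k * t))
      (A * k * Real.exp (k * t) - B * k * Real.exp (-k * t)) t := by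
    have := ((hasDerivAt_const t C).add ((h1.exp).const_mul A)).add ((h2.exp).const_mul B)
    exact this.congr_deriv (by ring)
  exact H.deriv

lemma deriv_gen2 (A B k : ℝ) :
    deriv (fun t => A * k * Real.exp (k * t) - B * k * Real.exp (-k * t))
      = fun t => A * k^2 * Real.exp (k * t) + B * k^2 * Real.exp (-k * t) := by
  funext t
  have h1 : HasDerivAt (fun t : ℝ => k * t) k t := by
    simpa using (hasDerivAt_id t).const_mul k
  have h2 : HasDerivAt (fun t : ℝ => -k * t) (-k) t := by
    simpa using (hasDerivAt_id t).const_mul (-k)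
  have H : HasDerivAt (fun t => A * k * Real.exp (k * t) - B * k * Real.exp (-k * t))
      (A * k^2 * Real.exp (k * t) + B * k^2 * Real.exp (-k * t)) t := by
    have := ((h1.exp).const_mul (A*k)).sub ((h2.exp).const_mul (B*k))
    exact this.congr_deriv (by ring)
  exact H.deriv

noncomputable def h1ex6 (e1 b1 c1 A1 A2 : ℝ) : ℝ → ℝ := fun t =>
  -e1 * c1 / b1 + A1 * Real.exp (Real.sqrt (b1 * e1) * t)
    + A2 * Real.exp (-(Real.sqrt (b1 * e1)) * t)

noncomputable def h2ex6 (e1 e2 b1 c1 A3 A4 : ℝ) : ℝ → ℝ := fun t =>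
  -e1 * c1 / (1 + b1) + A3 * Real.exp (Real.sqrt (-e2 * (1 + b1)) * t)
    + A4 * Real.exp (-(Real.sqrt (-e2 * (1 + b1))) * t)

theorem example_b1_nonzero_satisfies_gauss (e1 e2 : ℝ)
    (he1 : e1 = 1 ∨ e1 = -1) (he2 : e2 = 1 ∨ e2 = -1)
    (b1 c1 A1 A2 A3 A4 : ℝ)
    (hb1 : b1 ≠ 0) (hb1' : 1 + b1 ≠ 0)
    (hpos1 : b1 * e1 > 0) (hpos2 : -e2 * (1 + b1) > 0)
    (hconstraint :
      c1 ^ 2 - 4 * b1 * (1 + b1) * (b1 * A1 * A2 - (1 + b1) * A3 * A4) = 0) :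
    ∀ u1 u2 : ℝ,
      h1ex6 e1 b1 c1 A1 A2 u1 * h2ex6 e1 e2 b1 c1 A3 A4 u2
        + e2 * deriv (deriv (h2ex6 e1 e2 b1 c1 A3 A4)) u2
            * (h1ex6 e1 b1 c1 A1 A2 u1 - h2ex6 e1 e2 b1 c1 A3 A4 u2)
        + e1 * deriv (deriv (h1ex6 e1 b1 c1 A1 A2)) u1
            * (h2ex6 e1 e2 b1 c1 A3 A4 u2 - h1ex6 e1 b1 c1 A1 A2 u1)
        + e1 * (deriv (h1ex6 e1 b1 c1 A1 A2) u1) ^ 2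
        + e2 * (deriv (h2ex6 e1 e2 b1 c1 A3 A4) u2) ^ 2 = 0 := by
  intro u1 u2
  set k := Real.sqrt (b1 * e1) with hkdef
  set m := Real.sqrt (-e2 * (1 + b1)) with hmdef
  have hk2 : k ^ 2 = b1 * e1 := Real.sq_sqrt hpos1.le
  have hm2 : m ^ 2 = -e2 * (1 + b1) := Real.sq_sqrt hpos2.le
  have he1' : e1 ^ 2 = 1 := by rcases he1 with h | h <;> simp [h]
  have he2' : e2 ^ 2 = 1 := by rcases he2 with h | h <;> simp [h]
  have hd1 : deriv (h1ex6 e1 b1 c1 A1 A2)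
      = fun t => A1 * k * Real.exp (k * t) - A2 * k * Real.exp (-k * t) := by
    unfold h1ex6; rw [← hkdef]; exact deriv_gen _ _ _ _
  have hd2 : deriv (h2ex6 e1 e2 b1 c1 A3 A4)
      = fun t => A3 * m * Real.exp (m * t) - A4 * m * Real.exp (-m * t) := by
    unfold h2ex6; rw [← hmdef]; exact deriv_gen _ _ _ _
  have hdd1 : deriv (deriv (h1ex6 e1 b1 c1 A1 A2))
      = fun t => A1 * k^2 * Real.exp (k * t) + A2 * k^2 * Real.exp (-k * t) := by
    rw [hd1]; exact deriv_gen2 _ _ _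
  have hdd2 : deriv (deriv (h2ex6 e1 e2 b1 c1 A3 A4))
      = fun t => A3 * m^2 * Real.exp (m * t) + A4 * m^2 * Real.exp (-m * t) := by
    rw [hd2]; exact deriv_gen2 _ _ _
  have hab : Real.exp (k * u1) * Real.exp (-k * u1) = 1 := by
    rw [← Real.exp_add]; ring_nf; exact Real.exp_zero
  have hcd : Real.exp (m * u2) * Real.exp (-m * u2) = 1 := by
    rw [← Real.exp_add]; ring_nf; exact Real.exp_zero
  rw [hdd1, hdd2, hd1, hd2]
  unfold h1ex6 h2ex6
  simp only [← hkdef, ← hmdef]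
  set a := Real.exp (k * u1)
  set b := Real.exp (-k * u1)
  set c := Real.exp (m * u2)
  set d := Real.exp (-m * u2)
  field_simp
  rw [← mul_right_inj' (mul_ne_zero hb1 hb1')]
  linear_combination
      (e1*b1^2*(1+b1)^2*(A1*A3*a*c + A1*A4*a*d + A2*A3*b*c + A2*A4*b*d - 4*A1*A2*a*b)
        + e1^2*b1*(1+b1)*c1*(A1*a+A2*b)) * hk2
    + (e2*b1^2*(1+b1)^2*(A1*A3*a*c + A1*A4*a*d + A2*A3*b*c + A2*A4*b*d - 4*A3*A4*c*d)
        - e1*e2*b1*(1+b1)*c1*(A3*c+A4*d)) * hm2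
    + (b1*(1+b1)*c1^2
        + b1^3*(1+b1)^2*(A1*A3*a*c + A1*A4*a*d + A2*A3*b*c + A2*A4*b*d - 4*A1*A2*a*b)
        + e1*b1^2*(1+b1)*c1*(A1*a+A2*b)) * he1'
    + (-b1^2*(1+b1)^3*(A1*A3*a*c + A1*A4*a*d + A2*A3*b*c + A2*A4*b*d - 4*A3*A4*c*d)
        + e1*b1*(1+b1)^2*c1*(A3*c+A4*d)) * he2'
    + (-4*b1^3*(1+b1)^2*A1*A2) * hab
    + (4*b1^2*(1+b1)^3*A3*A4) * hcd
    + (b1*(1+b1)) * hconstraint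
end

section
/- Let b₁, c₁ be constants, ε₁, ε₂ ∈ {-1,1}, and h₁, h₂ smooth one-variable functions satisfying h₁'' − ε₁b₁h₁ = c₁ and h₂'' + ε₂(1+b₁)h₂ = −ε₁ε₂c₁. Then the expression E(u₁,u₂) = h₁(u₁)h₂(u₂) + ε₂h₂''(u₂)(h₁(u₁)−h₂(u₂)) + ε₁h₁''(u₁)(h₂(u₂)−h₁(u₁)) + ε₁(h₁'(u₁))² + ε₂(h₂'(u₂))² is constant on ℝ² (its partial derivatives with respect to u₁ and u₂ vanish identically). -/
theorem gauss_expression_constant (e1 e2 b1 c1 : ℝ)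
    (he1 : e1 = 1 ∨ e1 = -1) (he2 : e2 = 1 ∨ e2 = -1)
    (h1 h2 : ℝ → ℝ) (hs1 : ContDiff ℝ (⊤ : ℕ∞) h1) (hs2 : ContDiff ℝ (⊤ : ℕ∞) h2)
    (hode1 : ∀ t, deriv (deriv h1) t - e1 * b1 * h1 t = c1)
    (hode2 : ∀ t, deriv (deriv h2) t + e2 * (1 + b1) * h2 t = -(e1 * e2) * c1) :
    ∀ u1 u2 : ℝ,
      deriv (fun t =>
        h1 t * h2 u2 + e2 * deriv (deriv h2) u2 * (h1 t - h2 u2)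
          + e1 * deriv (deriv h1) t * (h2 u2 - h1 t)
          + e1 * (deriv h1 t) ^ 2 + e2 * (deriv h2 u2) ^ 2) u1 = 0 ∧
      deriv (fun t =>
        h1 u1 * h2 t + e2 * deriv (deriv h2) t * (h1 u1 - h2 t)
          + e1 * deriv (deriv h1) u1 * (h2 t - h1 u1)
          + e1 * (deriv h1 u1) ^ 2 + e2 * (deriv h2 t) ^ 2) u2 = 0 := by
  have hd1 : Differentiable ℝ h1 := hs1.differentiable (by simp)
  have hd2 : Differentiable ℝ h2 := hs2.differentiable (by simp)
  have hd1' : Differentiable ℝ (deriv h1) :=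
    (contDiff_infty_iff_deriv.mp (hs1.of_le (by simp))).2.differentiable (by norm_num)
  have hd2' : Differentiable ℝ (deriv h2) :=
    (contDiff_infty_iff_deriv.mp (hs2.of_le (by simp))).2.differentiable (by norm_num)
  have E1 : ∀ s, deriv (deriv h1) s = e1 * b1 * h1 s + c1 := fun s => by linarith [hode1 s]
  have E2 : ∀ s, deriv (deriv h2) s = -(e1 * e2) * c1 - e2 * (1 + b1) * h2 s := fun s => by
    linarith [hode2 s]
  intro u1 u2
  constructor
  · have H1 : HasDerivAt h1 (deriv h1 u1) u1 := (hd1 u1).hasDerivAt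
    have H1' : HasDerivAt (deriv h1) (deriv (deriv h1) u1) u1 := (hd1' u1).hasDerivAt
    have funeq : (fun t =>
        h1 t * h2 u2 + e2 * deriv (deriv h2) u2 * (h1 t - h2 u2)
          + e1 * deriv (deriv h1) t * (h2 u2 - h1 t)
          + e1 * (deriv h1 t) ^ 2 + e2 * (deriv h2 u2) ^ 2)
        = (fun t =>
        h1 t * h2 u2 + e2 * deriv (deriv h2) u2 * (h1 t - h2 u2)
          + e1 * (e1 * b1 * h1 t + c1) * (h2 u2 - h1 t)
          + e1 * (deriv h1 t) ^ 2 + e2 * (deriv h2 u2) ^ 2) := by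
      funext t; rw [E1 t]
    have A1 := H1.mul_const (h2 u2)
    have A2 := (H1.sub_const (h2 u2)).const_mul (e2 * deriv (deriv h2) u2)
    have A3l := ((H1.const_mul (e1 * b1)).add_const c1).const_mul e1
    have A3r := (hasDerivAt_const u1 (h2 u2)).sub H1
    have A3 := A3l.mul A3r
    have A4 := (H1'.pow 2).const_mul e1
    have key := (((A1.add A2).add A3).add A4).add_const (e2 * (deriv h2 u2) ^ 2)
    rw [funeq]; erw [key.deriv]; simp only [Pi.sub_apply]; rw [E1 u1, E2 u2]
    rcases he1 with rfl | rfl <;> rcases he2 with rfl | rfl <;> ring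
  · have H2 : HasDerivAt h2 (deriv h2 u2) u2 := (hd2 u2).hasDerivAt
    have H2' : HasDerivAt (deriv h2) (deriv (deriv h2) u2) u2 := (hd2' u2).hasDerivAt
    have funeq : (fun t =>
        h1 u1 * h2 t + e2 * deriv (deriv h2) t * (h1 u1 - h2 t)
          + e1 * deriv (deriv h1) u1 * (h2 t - h1 u1)
          + e1 * (deriv h1 u1) ^ 2 + e2 * (deriv h2 t) ^ 2)
        = (fun t =>
        h1 u1 * h2 t + e2 * (-(e1 * e2) * c1 - e2 * (1 + b1) * h2 t) * (h1 u1 - h2 t)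
          + e1 * deriv (deriv h1) u1 * (h2 t - h1 u1)
          + e1 * (deriv h1 u1) ^ 2 + e2 * (deriv h2 t) ^ 2) := by
      funext t; rw [E2 t]
    have B1 := H2.const_mul (h1 u1)
    have B2l := ((hasDerivAt_const u2 (-(e1 * e2) * c1)).sub
      (H2.const_mul (e2 * (1 + b1)))).const_mul e2
    have B2r := (hasDerivAt_const u2 (h1 u1)).sub H2
    have B2 := B2l.mul B2r
    have B3 := (H2.sub_const (h1 u1)).const_mul (e1 * deriv (deriv h1) u1)
    have B5 := (H2'.pow 2).const_mul e2
    have key := ((((B1.add B2).add B3).add_const (e1 * (deriv h1 u1) ^ 2)).add B5)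
    rw [funeq]; erw [key.deriv]; simp only [Pi.sub_apply]; rw [E1 u1, E2 u2]
    rcases he1 with rfl | rfl <;> rcases he2 with rfl | rfl <;> ring
end

section
/- Let h₁(u₁), h₂(u₂) be smooth functions with h₁ ≠ h₂ on an open set, and set Γ²₁₂ = h₁'/(h₂−h₁), Γ¹₁₂ = h₂'/(h₁−h₂). Then for X = (G₂−G₁)/(h₁−h₂) with G₁ = G₁(u₁), G₂ = G₂(u₂) smooth vector-valued functions, the mixed partial derivative satisfies X,₁₂ − Γ²₁₂X,₂ − Γ¹₁₂X,₁ = 0; i.e., the coordinate curves of X are lines of curvature (Codazzi compatibility). -/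
noncomputable def pdv1 (f : ℝ → ℝ → ℝ × ℝ × ℝ) : ℝ → ℝ → ℝ × ℝ × ℝ :=
  fun x y => deriv (fun t => f t y) x
noncomputable def pdv2 (f : ℝ → ℝ → ℝ × ℝ × ℝ) : ℝ → ℝ → ℝ × ℝ × ℝ :=
  fun x y => deriv (fun t => f x t) y

noncomputable def Xdup (h1 h2 : ℝ → ℝ) (G1 G2 : ℝ → ℝ × ℝ × ℝ) : ℝ → ℝ → ℝ × ℝ × ℝ :=
  fun u1 u2 => (h1 u1 - h2 u2)⁻¹ • (G2 u2 - G1 u1)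

theorem lines_of_curvature_codazzi
    (h1 h2 : ℝ → ℝ) (hs1 : ContDiff ℝ (⊤ : ℕ∞) h1) (hs2 : ContDiff ℝ (⊤ : ℕ∞) h2)
    (G1 G2 : ℝ → ℝ × ℝ × ℝ) (hG1 : ContDiff ℝ (⊤ : ℕ∞) G1) (hG2 : ContDiff ℝ (⊤ : ℕ∞) G2)
    (U : Set (ℝ × ℝ)) (hU : IsOpen U)
    (hne : ∀ p ∈ U, h1 p.1 ≠ h2 p.2) :
    ∀ p ∈ U,
      pdv2 (pdv1 (Xdup h1 h2 G1 G2)) p.1 p.2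
        - (deriv h1 p.1 / (h2 p.2 - h1 p.1)) • pdv2 (Xdup h1 h2 G1 G2) p.1 p.2
        - (deriv h2 p.2 / (h1 p.1 - h2 p.2)) • pdv1 (Xdup h1 h2 G1 G2) p.1 p.2 = 0 := by
  intro p hp
  obtain ⟨a, b⟩ := p
  have hab : h1 a ≠ h2 b := hne (a, b) hp
  have hD : h1 a - h2 b ≠ 0 := sub_ne_zero.mpr hab
  have hd1 : ∀ x, HasDerivAt h1 (deriv h1 x) x := fun x =>
    ((hs1.differentiable (by simp)) x).hasDerivAt
  have hd2 : ∀ x, HasDerivAt h2 (deriv h2 x) x := fun x =>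
    ((hs2.differentiable (by simp)) x).hasDerivAt
  have hdG1 : ∀ x, HasDerivAt G1 (deriv G1 x) x := fun x =>
    ((hG1.differentiable (by simp)) x).hasDerivAt
  have hdG2 : ∀ x, HasDerivAt G2 (deriv G2 x) x := fun x =>
    ((hG2.differentiable (by simp)) x).hasDerivAt
  -- formula for pdv1
  have hp1 : ∀ t, h1 a ≠ h2 t →
      HasDerivAt (fun s => Xdup h1 h2 G1 G2 s t)
        ((h1 a - h2 t)⁻¹ • (-(deriv G1 a))
          + (-(deriv h1 a) / (h1 a - h2 t) ^ 2) • (G2 t - G1 a)) a := by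
    intro t hxt
    have hc : HasDerivAt (fun s => h1 s - h2 t) (deriv h1 a) a := (hd1 a).sub_const _
    have hinv := hc.inv (sub_ne_zero.mpr hxt)
    have hf : HasDerivAt (fun s => G2 t - G1 s) (-(deriv G1 a)) a := (hdG1 a).const_sub _
    exact hinv.smul hf
  -- formula for pdv2
  have hp2 : HasDerivAt (fun s => Xdup h1 h2 G1 G2 a s)
      ((h1 a - h2 b)⁻¹ • (deriv G2 b)
        + (-(-(deriv h2 b)) / (h1 a - h2 b) ^ 2) • (G2 b - G1 a)) b := by
    have hc : HasDerivAt (fun s => h1 a - h2 s) (-(deriv h2 b)) b := (hd2 b).const_sub _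
    have hinv := hc.inv hD
    have hf : HasDerivAt (fun s => G2 s - G1 a) (deriv G2 b) b := (hdG2 b).sub_const _
    exact hinv.smul hf
  -- eventual equality for pdv1 X near b
  have hopen : IsOpen {t : ℝ | h2 t ≠ h1 a} :=
    isOpen_ne.preimage hs2.continuous
  have hmem : b ∈ {t : ℝ | h2 t ≠ h1 a} := hab.symm
  have heq : (fun t => pdv1 (Xdup h1 h2 G1 G2) a t)
      =ᶠ[nhds b] (fun t => (h1 a - h2 t)⁻¹ • (-(deriv G1 a))
          + (-(deriv h1 a) / (h1 a - h2 t) ^ 2) • (G2 t - G1 a)) := by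
    filter_upwards [hopen.mem_nhds hmem] with t ht
    exact (hp1 t (Ne.symm ht)).deriv
  -- derivative of the explicit formula in t at b
  set k1 := deriv h1 a with hk1
  set k2 := deriv h2 b with hk2
  have hcD : HasDerivAt (fun t => h1 a - h2 t) (-k2) b := (hd2 b).const_sub _
  have hpow : HasDerivAt (fun t => (h1 a - h2 t) ^ 2)
      ((2 : ℕ) * (h1 a - h2 b) ^ (2 - 1) * (-k2)) b := hcD.pow 2
  have hinvpow := hpow.inv (pow_ne_zero 2 hD)
  have hterm1 : HasDerivAt
      (fun t => (-k1 / (h1 a - h2 t) ^ 2) • (G2 t - G1 a))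
      ((-k1 / (h1 a - h2 b) ^ 2) • (deriv G2 b)
        + (-k1 * (-(((2 : ℕ) * (h1 a - h2 b) ^ (2 - 1) * (-k2))) / ((h1 a - h2 b) ^ 2) ^ 2)) • (G2 b - G1 a)) b := by
    have hc1 : HasDerivAt (fun t => -k1 / (h1 a - h2 t) ^ 2)
        (-k1 * (-(((2 : ℕ) * (h1 a - h2 b) ^ (2 - 1) * (-k2))) / ((h1 a - h2 b) ^ 2) ^ 2)) b := by
      simpa [div_eq_mul_inv] using hinvpow.const_mul (-k1)
    exact hc1.smul ((hdG2 b).sub_const _)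
  have hterm2 : HasDerivAt
      (fun t => (h1 a - h2 t)⁻¹ • (-(deriv G1 a)))
      ((-(-k2) / (h1 a - h2 b) ^ 2) • (-(deriv G1 a))) b :=
    (hcD.inv hD).smul_const _
  have hF := (hterm2.add hterm1)
  have hder2 : pdv2 (pdv1 (Xdup h1 h2 G1 G2)) a b
      = (-(-k2) / (h1 a - h2 b) ^ 2) • (-(deriv G1 a))
        + ((-k1 / (h1 a - h2 b) ^ 2) • (deriv G2 b)
          + (-k1 * (-(((2 : ℕ) * (h1 a - h2 b) ^ (2 - 1) * (-k2))) / ((h1 a - h2 b) ^ 2) ^ 2)) • (G2 b - G1 a)) := by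
    show deriv (fun t => pdv1 (Xdup h1 h2 G1 G2) a t) b = _
    rw [heq.deriv_eq]
    exact hF.deriv
  have hder1 : pdv1 (Xdup h1 h2 G1 G2) a b
      = (h1 a - h2 b)⁻¹ • (-(deriv G1 a))
        + (-k1 / (h1 a - h2 b) ^ 2) • (G2 b - G1 a) := (hp1 b hab).deriv
  have hder2' : pdv2 (Xdup h1 h2 G1 G2) a b
      = (h1 a - h2 b)⁻¹ • (deriv G2 b)
        + (-(-k2) / (h1 a - h2 b) ^ 2) • (G2 b - G1 a) := hp2.deriv
  show pdv2 (pdv1 (Xdup h1 h2 G1 G2)) a b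
      - (k1 / (h2 b - h1 a)) • pdv2 (Xdup h1 h2 G1 G2) a b
      - (k2 / (h1 a - h2 b)) • pdv1 (Xdup h1 h2 G1 G2) a b = 0
  rw [hder2, hder1, hder2']
  have hD' : h2 b - h1 a ≠ 0 := sub_ne_zero.mpr hab.symm
  match_scalars <;> field_simp <;> ring
end
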